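/- arXiv:1411.1458 — 3 statements merged into one kernel-verified Lean document; each statement's English description precedes it below -/
import Mathlib

section
/- If f : ℂ → ℂ is continuously differentiable and vanishes on a neighborhood of the boundary circle ∂D of the closed unit disc D, then for every w in the open unit disc, f(w) = -(1/π) ∫_D (∂f/∂z̄)(z)/(z - w) dm(z), where m is Lebesgue measure. -/
/-!
In polar coordinates `z = r e^{iθ}` the area element `r dr dθ` cancels the singularity of `1 / z`,
and `r (∂f/∂z̄)(z) / z = (∂_r f + (i / r) ∂_θ f) / 2`. For compactly supported `f`, the angular
term integrates to `0` over every circle and the radial term to `-f 0` along every ray, so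
`∫ (∂f/∂z̄)(z) / z = -π f 0`; translating gives the same at any centre `w`. Since `f` vanishes near
the unit circle, extending `f|_D` by zero yields a compactly supported `C¹` function with the same
`∂f/∂z̄` on `D`, to which this applies.
-/

open MeasureTheory

/-- The Wirtinger derivative `∂f/∂z̄ = (1/2)(∂f/∂x + i ∂f/∂y)`. -/
noncomputable def wirtinger (f : ℂ → ℂ) (z : ℂ) : ℂ :=
  (fderiv ℝ f z 1 + Complex.I * fderiv ℝ f z Complex.I) / 2

open Real Set Filter Topology Metric ComplexConjugate
open Complex (I exp)

lemma Continuous.integrableOn_of_isBounded {X E : Type*} [MetricSpace X] [ProperSpace X]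
    [MeasurableSpace X] [OpensMeasurableSpace X] {μ : Measure X} [IsFiniteMeasureOnCompacts μ]
    [NormedAddCommGroup E] {g : X → E} (hg : Continuous g) {s : Set X}
    (hs : Bornology.IsBounded s) : IntegrableOn g s μ :=
  (hg.continuousOn.integrableOn_compact hs.isCompact_closure).mono_set subset_closure

lemma indicator_eventuallyEq_of_mem_closure {E F : Type*} [TopologicalSpace E] [Zero F]
    {s U : Set E} {f : E → F} (hU : IsOpen U) (hsU : frontier s ⊆ U) (hfU : ∀ z ∈ U, f z = 0)
    {z : E} (hz : z ∈ closure s) : s.indicator f =ᶠ[𝓝 z] f := by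
  rw [closure_eq_interior_union_frontier] at hz
  rcases hz with hz | hz
  · filter_upwards [mem_interior_iff_mem_nhds.mp hz] with x hx using indicator_of_mem hx f
  · filter_upwards [hU.mem_nhds (hsU hz)] with x hx
    exact indicator_apply_eq_self.mpr fun _ => hfU x hx

lemma ContDiff.indicator_of_frontier_subset {𝕜 E F : Type*} [NontriviallyNormedField 𝕜]
    [NormedAddCommGroup E] [NormedSpace 𝕜 E] [NormedAddCommGroup F] [NormedSpace 𝕜 F]
    {s U : Set E} {f : E → F} {n : WithTop ℕ∞} (hf : ContDiff 𝕜 n f) (hU : IsOpen U)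
    (hsU : frontier s ⊆ U) (hfU : ∀ z ∈ U, f z = 0) : ContDiff 𝕜 n (s.indicator f) := by
  refine contDiff_iff_contDiffAt.mpr fun z => ?_
  by_cases hz : z ∈ closure s
  · exact hf.contDiffAt.congr_of_eventuallyEq
      (indicator_eventuallyEq_of_mem_closure hU hsU hfU hz)
  · refine (contDiffAt_const (c := (0 : F))).congr_of_eventuallyEq ?_
    filter_upwards [isClosed_closure.isOpen_compl.mem_nhds hz] with x hx
    exact indicator_of_notMem (fun h => hx (subset_closure h)) f

lemma ContinuousLinearMap.apply_ofReal_add_ofReal_mul_I (D : ℂ →L[ℝ] ℂ) (a b : ℝ) :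
    D (a + b * I) = a * D 1 + b * D I := by
  rw [show (a : ℂ) + b * I = a • (1 : ℂ) + b • I by simp [Complex.real_smul], map_add,
    map_smul, map_smul, Complex.real_smul, Complex.real_smul]

lemma conj_mul_wirtinger (f : ℂ → ℂ) (z u : ℂ) :
    conj u * wirtinger f z = (fderiv ℝ f z u + I * fderiv ℝ f z (I * u)) / 2 := by
  obtain ⟨a, b, rfl⟩ : ∃ a b : ℝ, u = a + b * I := ⟨u.re, u.im, (Complex.re_add_im u).symm⟩
  have hIu : I * (a + b * I) = (-b : ℝ) + a * I := by
    push_cast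
    linear_combination b * Complex.I_sq
  rw [hIu, (fderiv ℝ f z).apply_ofReal_add_ofReal_mul_I,
    (fderiv ℝ f z).apply_ofReal_add_ofReal_mul_I, wirtinger]
  simp only [map_add, map_mul, Complex.conj_ofReal, Complex.conj_I]
  push_cast
  linear_combination (-(b * fderiv ℝ f z I) / 2) * Complex.I_sq

lemma wirtinger_congr {f g : ℂ → ℂ} {z : ℂ} (h : f =ᶠ[𝓝 z] g) :
    wirtinger f z = wirtinger g z := by
  simp only [wirtinger, h.fderiv_eq]

lemma wirtinger_comp_add_right (f : ℂ → ℂ) (a z : ℂ) :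
    wirtinger (fun x => f (x + a)) z = wirtinger f (z + a) := by
  simp only [wirtinger, fderiv_comp_add_right]

lemma wirtinger_of_notMem_tsupport {f : ℂ → ℂ} {z : ℂ} (hz : z ∉ tsupport f) :
    wirtinger f z = 0 := by
  simp [wirtinger, fderiv_of_notMem_tsupport (𝕜 := ℝ) hz]

lemma polarCoord_symm_eq_circleMap (p : ℝ × ℝ) :
    Complex.polarCoord.symm p = circleMap 0 p.1 p.2 := by
  simp [circleMap_zero, Complex.exp_mul_I]

lemma hasDerivAt_circleMap_radius (c : ℂ) (R θ : ℝ) :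
    HasDerivAt (fun r : ℝ => circleMap c r θ) (exp (θ * I)) R := by
  simpa [circleMap] using ((hasDerivAt_id R).ofReal_comp.mul_const (exp (θ * I))).const_add c

lemma smul_wirtinger_div_circleMap (f : ℂ → ℂ) {r : ℝ} (hr : r ≠ 0) (θ : ℝ) :
    r • (wirtinger f (circleMap 0 r θ) / circleMap 0 r θ) =
      (fderiv ℝ f (circleMap 0 r θ) (exp (θ * I)) +
        I * fderiv ℝ f (circleMap 0 r θ) (I * exp (θ * I))) / 2 := by
  rw [← conj_mul_wirtinger, ← Complex.inv_eq_conj (Complex.norm_exp_ofReal_mul_I θ),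
    circleMap_zero, Complex.real_smul]
  have : (r : ℂ) ≠ 0 := by exact_mod_cast hr
  field_simp

section

variable {f : ℂ → ℂ}

lemma intervalIntegral_fderiv_circleMap_radius (hf : ContDiff ℝ 1 f) (c : ℂ) (R θ : ℝ) :
    ∫ r in (0)..R, fderiv ℝ f (circleMap c r θ) (exp (θ * I)) = f (circleMap c R θ) - f c := by
  have := hf.continuous_fderiv one_ne_zero
  rw [intervalIntegral.integral_eq_sub_of_hasDerivAt (f := fun r => f (circleMap c r θ))
    (fun r _ => (hf.differentiable one_ne_zero _).hasFDerivAt.comp_hasDerivAt r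
      (hasDerivAt_circleMap_radius c r θ)) (Continuous.intervalIntegrable (by fun_prop) _ _)]
  simp [circleMap_zero_radius]

lemma intervalIntegral_fderiv_circleMap_I_mul (hf : ContDiff ℝ 1 f) (c : ℂ) {R : ℝ}
    (hR : R ≠ 0) :
    ∫ θ in (-π)..π, fderiv ℝ f (circleMap c R θ) (I * exp (θ * I)) = 0 := by
  have := hf.continuous_fderiv one_ne_zero
  have hderiv (θ : ℝ) : HasDerivAt (fun θ => f (circleMap c R θ))
      (R • fderiv ℝ f (circleMap c R θ) (I * exp (θ * I))) θ := by
    refine ((hf.differentiable one_ne_zero _).hasFDerivAt.comp_hasDerivAt θ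
      (hasDerivAt_circleMap c R θ)).congr_deriv ?_
    rw [← map_smul, circleMap_zero, Complex.real_smul, mul_comm I, mul_assoc]
  have hperiod : circleMap c R π = circleMap c R (-π) := by
    simpa [two_mul, ← sub_eq_add_neg] using periodic_circleMap c R (-π)
  have h := intervalIntegral.integral_eq_sub_of_hasDerivAt (a := -π) (b := π)
    (fun θ _ => hderiv θ) (Continuous.intervalIntegrable (by fun_prop) _ _)
  rw [intervalIntegral.integral_smul, hperiod, sub_self] at h
  exact (smul_eq_zero.mp h).resolve_left hR

lemma setIntegral_fderiv_circleMap_radius (hf : ContDiff ℝ 1 f) {R : ℝ} (hR : 0 ≤ R)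
    (hfR : ∀ θ, f (circleMap 0 R θ) = 0) :
    ∫ p in Ioc 0 R ×ˢ Ioo (-π) π, fderiv ℝ f (circleMap 0 p.1 p.2) (exp (p.2 * I)) =
      2 * π * -f 0 := by
  have := hf.continuous_fderiv one_ne_zero
  have hray (θ : ℝ) : ∫ r in Ioc 0 R, fderiv ℝ f (circleMap 0 r θ) (exp (θ * I)) = -f 0 := by
    rw [← intervalIntegral.integral_of_le hR, intervalIntegral_fderiv_circleMap_radius hf, hfR,
      zero_sub]
  rw [Measure.volume_eq_prod, ← setIntegral_prod_swap, setIntegral_prod _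
    (Continuous.integrableOn_of_isBounded (by fun_prop) ((isBounded_Ioo _ _).prod
      (isBounded_Ioc _ _)))]
  simp only [Prod.fst_swap, Prod.snd_swap, hray, setIntegral_const,
    volume_real_Ioo_of_le (by linarith [pi_pos] : -π ≤ π), Complex.real_smul]
  push_cast
  ring

lemma setIntegral_fderiv_circleMap_I_mul (hf : ContDiff ℝ 1 f) (R : ℝ) :
    ∫ p in Ioc 0 R ×ˢ Ioo (-π) π, I * fderiv ℝ f (circleMap 0 p.1 p.2) (I * exp (p.2 * I)) =
      0 := by
  have := hf.continuous_fderiv one_ne_zero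
  rw [Measure.volume_eq_prod, setIntegral_prod _ (Continuous.integrableOn_of_isBounded
    (by fun_prop) ((isBounded_Ioc _ _).prod (isBounded_Ioo _ _)))]
  refine setIntegral_eq_zero_of_forall_eq_zero fun r hr => ?_
  rw [integral_const_mul, ← integral_Ioc_eq_integral_Ioo,
    ← intervalIntegral.integral_of_le (by linarith [pi_pos]),
    intervalIntegral_fderiv_circleMap_I_mul hf 0 hr.1.ne', mul_zero]

theorem integral_wirtinger_div_self (hf : ContDiff ℝ 1 f) (hc : HasCompactSupport f) :
    ∫ z, wirtinger f z / z = -π * f 0 := by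
  obtain ⟨R, hR, hfR⟩ := hc.isCompact.isBounded.subset_ball_lt 0 0
  have hout {r : ℝ} (θ : ℝ) (hr : R ≤ r) : circleMap 0 r θ ∉ tsupport f := fun h => by
    have := hfR h
    rw [mem_ball_zero_iff, norm_circleMap_zero] at this
    linarith [le_abs_self r]
  have := hf.continuous_fderiv one_ne_zero
  set S := Ioc 0 R ×ˢ Ioo (-π) π
  have hpolar : ∫ z, wirtinger f z / z = ∫ p in S,
      (fderiv ℝ f (circleMap 0 p.1 p.2) (exp (p.2 * I)) +
        I * fderiv ℝ f (circleMap 0 p.1 p.2) (I * exp (p.2 * I))) / 2 := by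
    rw [← Complex.integral_comp_polarCoord_symm, polarCoord_target,
      setIntegral_eq_of_subset_of_forall_sdiff_eq_zero (measurableSet_Ioi.prod measurableSet_Ioo)
        (prod_mono Ioc_subset_Ioi_self subset_rfl)]
    · refine setIntegral_congr_fun (measurableSet_Ioc.prod measurableSet_Ioo) fun p hp => ?_
      rw [polarCoord_symm_eq_circleMap, smul_wirtinger_div_circleMap f hp.1.1.ne']
    · rintro ⟨r, θ⟩ ⟨⟨hr, hθ⟩, hnot⟩
      have hRr : R < r := by
        by_contra! h
        exact hnot ⟨⟨hr, h⟩, hθ⟩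
      rw [polarCoord_symm_eq_circleMap, wirtinger_of_notMem_tsupport (hout θ hRr.le), zero_div,
        smul_zero]
  have hS : Bornology.IsBounded S := (isBounded_Ioc _ _).prod (isBounded_Ioo _ _)
  rw [hpolar, integral_div, integral_add (Continuous.integrableOn_of_isBounded (by fun_prop) hS)
    (Continuous.integrableOn_of_isBounded (by fun_prop) hS),
    setIntegral_fderiv_circleMap_radius hf hR.le fun θ =>
      image_eq_zero_of_notMem_tsupport (hout θ le_rfl),
    setIntegral_fderiv_circleMap_I_mul hf]
  ring

theorem integral_wirtinger_div_sub (hf : ContDiff ℝ 1 f) (hc : HasCompactSupport f) (w : ℂ) :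
    ∫ z, wirtinger f z / (z - w) = -π * f w := by
  have hg : ContDiff ℝ 1 (fun z => f (z + w)) := hf.comp (contDiff_id.add contDiff_const)
  have hgc : HasCompactSupport (fun z => f (z + w)) := hc.comp_homeomorph (Homeomorph.addRight w)
  rw [← integral_add_right_eq_self _ w]
  simp_rw [add_sub_cancel_right, ← wirtinger_comp_add_right]
  simpa using integral_wirtinger_div_self hg hgc

end

theorem stmt_4 (f : ℂ → ℂ) (hf : ContDiff ℝ 1 f)
    (U : Set ℂ) (hU : IsOpen U) (hsU : Metric.sphere (0:ℂ) 1 ⊆ U)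
    (hfU : ∀ z ∈ U, f z = 0)
    (w : ℂ) (hw : w ∈ Metric.ball (0:ℂ) 1) :
    f w = -(Real.pi : ℂ)⁻¹ *
        ∫ z in Metric.closedBall (0:ℂ) 1, wirtinger f z / (z - w) := by
  set F := (closedBall (0 : ℂ) 1).indicator f
  have hfrontier : frontier (closedBall (0 : ℂ) 1) ⊆ U :=
    (frontier_closedBall' 0 1).subset.trans hsU
  have hFsupp : tsupport F ⊆ closedBall 0 1 :=
    closure_minimal support_indicator_subset isClosed_closedBall
  have hFint :
      ∫ z in closedBall 0 1, wirtinger f z / (z - w) = ∫ z, wirtinger F z / (z - w) := by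
    rw [← setIntegral_eq_integral_of_forall_compl_eq_zero (f := fun z => wirtinger F z / (z - w))
      fun z hz => by rw [wirtinger_of_notMem_tsupport fun h => hz (hFsupp h), zero_div]]
    refine setIntegral_congr_fun measurableSet_closedBall fun z hz => ?_
    rw [wirtinger_congr (indicator_eventuallyEq_of_mem_closure hU hfrontier hfU (subset_closure hz))]
  rw [hFint, integral_wirtinger_div_sub (hf.indicator_of_frontier_subset hU hfrontier hfU)
    ((isCompact_closedBall 0 1).of_isClosed_subset (isClosed_tsupport _) hFsupp),
    indicator_of_mem (ball_subset_closedBall hw)]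
  field_simp
end

section
/- The Calabi homomorphism Cal : Ham_c(D, ω) → ℝ is a group homomorphism: Cal(φψ) = Cal(φ) + Cal(ψ) for all compactly supported Hamiltonian diffeomorphisms φ, ψ of the open unit disc. -/
open MeasureTheory

/-- The closed unit disc in `ℂ`. -/
noncomputable def Disc : Set ℂ := Metric.closedBall (0:ℂ) 1

/-- A compactly supported Hamiltonian isotopy of the unit disc: a smooth family
`φ_t` of area-preserving diffeomorphisms of the disc, equal to the identity near
the boundary, starting at the identity, generated by the Hamiltonian vector field
of a smooth family of Hamiltonians `H_t` vanishing near the boundary;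
the flow equation `d/dt φ_t(z) = ξ_t(φ_t(z))` uses `ξ_t = 2i ∂H_t/∂z̄`,
which is `ι_{X_t} ω = -dH_t` for `ω = dx ∧ dy`. -/
structure HamIsotopy where
  φ : ℝ → ℂ → ℂ
  H : ℝ → ℂ → ℝ
  smooth_φ : ContDiff ℝ (⊤ : ℕ∞) (fun p : ℝ × ℂ => φ p.1 p.2)
  smooth_H : ContDiff ℝ (⊤ : ℕ∞) (fun p : ℝ × ℂ => H p.1 p.2)
  init : φ 0 = id
  bij : ∀ t, Set.BijOn (φ t) Disc Disc
  measPres : ∀ t, MeasurePreserving (φ t) (volume.restrict Disc) (volume.restrict Disc)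
  bdry : ∃ r, r < 1 ∧ ∀ t z, r ≤ ‖z‖ → φ t z = z ∧ H t z = 0
  flow : ∀ t z, HasDerivAt (fun s => φ s z)
    (2 * Complex.I * wirtinger (fun w => (H t w : ℂ)) (φ t z)) t

/-- The Calabi invariant of a Hamiltonian isotopy: `∫₀¹ dt ∫_D H_t ω`. -/
noncomputable def Cal (Γ : HamIsotopy) : ℝ :=
  ∫ t in (0:ℝ)..1, ∫ z in Disc, Γ.H t z

/-- The average rotation number of a Hamiltonian isotopy:
`Φ = ∫_{X₂} dm²(x) ∫_{φ_t·x} θ`, where the integral of `θ = Im α` along the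
path `t ↦ (φ_t(z₁), φ_t(z₂))` is `(1/2π) ∫₀¹ Im((d/dt)(φ_t z₁ - φ_t z₂)/(φ_t z₁ - φ_t z₂)) dt`. -/
noncomputable def Phi (Γ : HamIsotopy) : ℝ :=
  ∫ p in Disc ×ˢ Disc,
    (1 / (2 * Real.pi)) *
      ∫ t in (0:ℝ)..1,
        ((deriv (fun s => Γ.φ s p.1 - Γ.φ s p.2) t) / (Γ.φ t p.1 - Γ.φ t p.2)).im


namespace HamCal

variable (Γ : HamIsotopy)

noncomputable def Psi : ℝ × ℂ → ℂ := fun p => Γ.φ p.1 p.2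
noncomputable def A (p : ℝ × ℂ) : ℝ × ℂ →L[ℝ] ℂ := fderiv ℝ (Psi Γ) p
noncomputable def S (p : ℝ × ℂ) : ℝ × ℂ →L[ℝ] (ℝ × ℂ →L[ℝ] ℂ) := fderiv ℝ (A Γ) p
noncomputable def Th : ℝ × ℂ → ℝ := fun p => Γ.H p.1 p.2
noncomputable def AH (p : ℝ × ℂ) : ℝ × ℂ →L[ℝ] ℝ := fderiv ℝ (Th Γ) p

lemma hA (p : ℝ × ℂ) : HasFDerivAt (Psi Γ) (A Γ p) p :=
  (Γ.smooth_φ.differentiable (by simp) p).hasFDerivAt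

lemma contDiff_A : ContDiff ℝ (⊤ : ℕ∞) (A Γ) := Γ.smooth_φ.fderiv_right (m := (⊤ : ℕ∞)) (by simp)

lemma hS (p : ℝ × ℂ) : HasFDerivAt (A Γ) (S Γ p) p :=
  ((contDiff_A Γ).differentiable (by simp) p).hasFDerivAt

lemma contA : Continuous (A Γ) := (contDiff_A Γ).continuous

lemma contS : Continuous (S Γ) := ((contDiff_A Γ).fderiv_right (m := (⊤ : ℕ∞)) (by simp)).continuous

lemma hAH (p : ℝ × ℂ) : HasFDerivAt (Th Γ) (AH Γ p) p :=
  (Γ.smooth_H.differentiable (by simp) p).hasFDerivAt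

lemma contAH : Continuous (AH Γ) := (Γ.smooth_H.fderiv_right (m := (⊤ : ℕ∞)) (by simp)).continuous

lemma Ssymm (p : ℝ × ℂ) (v w : ℝ × ℂ) : S Γ p v w = S Γ p w v := by
  have : IsSymmSndFDerivAt ℝ (Psi Γ) p := Γ.smooth_φ.contDiffAt.isSymmSndFDerivAt (by
    rw [minSmoothness_of_isRCLikeNormedField]; exact WithTop.coe_le_coe.2 (le_top : (2:ℕ∞) ≤ ⊤))
  exact this v w

/-- time-derivative of `φ` equals `A _ (1,0)`. -/
lemma hPsi_t (t : ℝ) (z : ℂ) :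
    HasDerivAt (fun s => Γ.φ s z) (A Γ (t, z) (1, 0)) t := by
  have h1 : HasDerivAt (fun s : ℝ => (s, z)) ((1 : ℝ), (0 : ℂ)) t :=
    HasDerivAt.prodMk (hasDerivAt_id t) (hasDerivAt_const t z)
  exact (hA Γ (t, z)).comp_hasDerivAt t h1

lemma A_t_eq (t : ℝ) (z : ℂ) :
    A Γ (t, z) (1, 0) = 2 * Complex.I * wirtinger (fun w => (Γ.H t w : ℂ)) (Γ.φ t z) :=
  (hPsi_t Γ t z).unique (Γ.flow t z)

/-- space-derivative of `φ t`. -/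
lemma hPsi_z (t : ℝ) (z : ℂ) :
    HasFDerivAt (Γ.φ t) ((A Γ (t, z)).comp (ContinuousLinearMap.inr ℝ ℝ ℂ)) z := by
  have h1 : HasFDerivAt (fun y : ℂ => (t, y)) (ContinuousLinearMap.inr ℝ ℝ ℂ) z :=
    HasFDerivAt.prodMk (hasFDerivAt_const t z) (hasFDerivAt_id z)
  exact (hA Γ (t, z)).comp z h1

lemma fderiv_phi (t : ℝ) (z : ℂ) (v : ℂ) :
    fderiv ℝ (Γ.φ t) z v = A Γ (t, z) (0, v) := by
  rw [(hPsi_z Γ t z).fderiv]; rfl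

lemma hH_z (t : ℝ) (z : ℂ) :
    HasFDerivAt (Γ.H t) ((AH Γ (t, z)).comp (ContinuousLinearMap.inr ℝ ℝ ℂ)) z := by
  have h1 : HasFDerivAt (fun y : ℂ => (t, y)) (ContinuousLinearMap.inr ℝ ℝ ℂ) z :=
    HasFDerivAt.prodMk (hasFDerivAt_const t z) (hasFDerivAt_id z)
  exact (hAH Γ (t, z)).comp z h1

/-- mixed partial: `s ↦ A (s,z) (0,v)` has derivative `S (1,0) (0,v)`. -/
lemma hA_t (t : ℝ) (z : ℂ) (v : ℂ) :
    HasDerivAt (fun s => A Γ (s, z) (0, v)) (S Γ (t, z) (1, 0) (0, v)) t := by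
  have h1 : HasDerivAt (fun s : ℝ => (s, z)) ((1 : ℝ), (0 : ℂ)) t :=
    HasDerivAt.prodMk (hasDerivAt_id t) (hasDerivAt_const t z)
  have h2 : HasDerivAt (fun s => A Γ (s, z)) (S Γ (t, z) (1, 0)) t :=
    (hS Γ (t, z)).comp_hasDerivAt t h1
  have h3 := h2.clm_apply (hasDerivAt_const t ((0 : ℝ), v))
  simpa using h3

/-- space-derivative of `y ↦ A (t,y) u`. -/
lemma hA_z (t : ℝ) (z : ℂ) (u : ℝ × ℂ) :
    HasFDerivAt (fun y : ℂ => A Γ (t, y) u)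
      (((S Γ (t, z)).flip u).comp (ContinuousLinearMap.inr ℝ ℝ ℂ)) z := by
  have h1 : HasFDerivAt (fun y : ℂ => (t, y)) (ContinuousLinearMap.inr ℝ ℝ ℂ) z :=
    HasFDerivAt.prodMk (hasFDerivAt_const t z) (hasFDerivAt_id z)
  have h2 : HasFDerivAt (fun y : ℂ => A Γ (t, y)) ((S Γ (t, z)).comp (ContinuousLinearMap.inr ℝ ℝ ℂ)) z :=
    (hS Γ (t, z)).comp z h1
  have h3 := h2.clm_apply (hasFDerivAt_const u z)
  refine h3.congr_fderiv ?_
  ext w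
  simp

end HamCal

namespace HamCal

variable (Γ : HamIsotopy)

lemma im_conj_swap (a b : ℂ) :
    ((starRingEnd ℂ) a * b).im = -(((starRingEnd ℂ) b) * a).im := by
  simp [Complex.mul_im]; ring

/-- Key identity: `Im(conj u * ξ_t(y)) = dH_t(y)[u]`. -/
lemma KI (t : ℝ) (y u : ℂ) :
    ((starRingEnd ℂ) u * (2 * Complex.I * wirtinger (fun w => (Γ.H t w : ℂ)) y)).im
      = AH Γ (t, y) (0, u) := by
  have hco : HasFDerivAt (fun w : ℂ => ((Γ.H t w : ℂ)))
      (Complex.ofRealCLM.comp ((AH Γ (t, y)).comp (ContinuousLinearMap.inr ℝ ℝ ℂ))) y :=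
    Complex.ofRealCLM.hasFDerivAt.comp y (hH_z Γ t y)
  set a : ℝ := AH Γ (t, y) (0, 1) with ha
  set b : ℝ := AH Γ (t, y) (0, Complex.I) with hb
  have hw : wirtinger (fun w => ((Γ.H t w : ℂ))) y = ((a : ℂ) + Complex.I * (b : ℂ)) / 2 := by
    rw [wirtinger, hco.fderiv]
    simp [ha, hb]
  rw [hw]
  have hu : ((0 : ℝ), u) = u.re • ((0 : ℝ), (1 : ℂ)) + u.im • ((0 : ℝ), Complex.I) := by
    simp [Prod.ext_iff, Complex.ext_iff]
  rw [hu, map_add, _root_.map_smul, _root_.map_smul, smul_eq_mul, smul_eq_mul, ← ha, ← hb]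
  simp [Complex.mul_im]
  ring

noncomputable def gam (t : ℝ) (z : ℂ) : ℝ :=
  2⁻¹ * ((starRingEnd ℂ) (Γ.φ t z) * A Γ (t, z) (1, 0)).im - Γ.H t (Γ.φ t z)

noncomputable def F (z : ℂ) : ℝ := ∫ t in (0:ℝ)..1, gam Γ t z

noncomputable def P (z v : ℂ) (s τ : ℝ) : ℝ :=
  2⁻¹ * ((starRingEnd ℂ) (Γ.φ s (z + τ • v)) * A Γ (s, z + τ • v) (0, v)).im

noncomputable def Gfun (z v : ℂ) (s τ : ℝ) : ℝ :=
  2⁻¹ * (((starRingEnd ℂ) (A Γ (s, z + τ • v) (1, 0)) * A Γ (s, z + τ • v) (0, v)).im +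
    ((starRingEnd ℂ) (Γ.φ s (z + τ • v)) * S Γ (s, z + τ • v) (1, 0) (0, v)).im)

lemma contPsi : Continuous (Psi Γ) := Γ.smooth_φ.continuous

lemma contTh : Continuous (Th Γ) := Γ.smooth_H.continuous

lemma contGam : Continuous (fun p : ℝ × ℂ => gam Γ p.1 p.2) := by
  have h1 : Continuous fun p : ℝ × ℂ => (starRingEnd ℂ) (Psi Γ p) :=
    Complex.continuous_conj.comp (contPsi Γ)
  have h2 : Continuous fun p : ℝ × ℂ => A Γ p (1, 0) :=
    (contA Γ).clm_apply continuous_const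
  have h3 : Continuous fun p : ℝ × ℂ => Th Γ (p.1, Psi Γ p) :=
    (contTh Γ).comp (continuous_fst.prodMk (contPsi Γ))
  exact (continuous_const.mul ((Complex.continuous_im.comp (h1.mul h2)))).sub h3

lemma contGfun (z v : ℂ) : Continuous (fun q : ℝ × ℝ => Gfun Γ z v q.1 q.2) := by
  have hm : Continuous fun q : ℝ × ℝ => ((q.1 : ℝ), z + q.2 • v) :=
    continuous_fst.prodMk (continuous_const.add (continuous_snd.smul continuous_const))
  have h1 : Continuous fun q : ℝ × ℝ => A Γ (q.1, z + q.2 • v) (1, 0) :=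
    ((contA Γ).comp hm).clm_apply continuous_const
  have h2 : Continuous fun q : ℝ × ℝ => A Γ (q.1, z + q.2 • v) (0, v) :=
    ((contA Γ).comp hm).clm_apply continuous_const
  have h3 : Continuous fun q : ℝ × ℝ => Psi Γ (q.1, z + q.2 • v) :=
    (contPsi Γ).comp hm
  have h4 : Continuous fun q : ℝ × ℝ => S Γ (q.1, z + q.2 • v) (1, 0) (0, v) :=
    (((contS Γ).comp hm).clm_apply continuous_const).clm_apply continuous_const
  exact continuous_const.mul ((Complex.continuous_im.comp
      ((Complex.continuous_conj.comp h1).mul h2)).add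
    (Complex.continuous_im.comp ((Complex.continuous_conj.comp h3).mul h4)))

lemma hP_s (z v : ℂ) (s τ : ℝ) :
    HasDerivAt (fun s' => P Γ z v s' τ) (Gfun Γ z v s τ) s := by
  set w := z + τ • v with hwdef
  have h1 : HasDerivAt (fun s' => Γ.φ s' w) (A Γ (s, w) (1, 0)) s := hPsi_t Γ s w
  have h1' : HasDerivAt (fun s' => (starRingEnd ℂ) (Γ.φ s' w))
      ((starRingEnd ℂ) (A Γ (s, w) (1, 0))) s := by
    have := (Complex.conjCLE.toContinuousLinearMap.hasFDerivAt).comp_hasDerivAt s h1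
    simpa [Function.comp_def] using this
  have h2 : HasDerivAt (fun s' => A Γ (s', w) (0, v)) (S Γ (s, w) (1, 0) (0, v)) s :=
    hA_t Γ s w v
  have h4 := ((Complex.imCLM.hasFDerivAt).comp_hasDerivAt s (h1'.mul h2)).const_mul (2⁻¹ : ℝ)
  exact h4

lemma hg_τ (z v : ℂ) (s τ : ℝ) :
    HasDerivAt (fun τ' => gam Γ s (z + τ' • v)) (Gfun Γ z v s τ) τ := by
  set w := z + τ • v with hwdef
  have hc : HasDerivAt (fun τ' : ℝ => z + τ' • v) v τ := by
    simpa using ((hasDerivAt_id τ).smul_const v).const_add z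
  have h1 : HasDerivAt (fun τ' => Γ.φ s (z + τ' • v)) (A Γ (s, w) (0, v)) τ := by
    simpa [Function.comp_def] using (hPsi_z Γ s w).comp_hasDerivAt τ hc
  set u := A Γ (s, w) (0, v) with hudef
  have h1' : HasDerivAt (fun τ' => (starRingEnd ℂ) (Γ.φ s (z + τ' • v)))
      ((starRingEnd ℂ) u) τ := by
    have := (Complex.conjCLE.toContinuousLinearMap.hasFDerivAt).comp_hasDerivAt τ h1
    simpa [Function.comp_def] using this
  have h2 : HasDerivAt (fun τ' => A Γ (s, z + τ' • v) (1, 0)) (S Γ (s, w) (0, v) (1, 0)) τ := by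
    simpa [Function.comp_def] using (hA_z Γ s w (1, 0)).comp_hasDerivAt τ hc
  have h3 : HasDerivAt (fun τ' => Γ.H s (Γ.φ s (z + τ' • v)))
      (AH Γ (s, Γ.φ s w) (0, u)) τ := by
    simpa [Function.comp_def] using (hH_z Γ s (Γ.φ s w)).comp_hasDerivAt τ h1
  have h4 := (((Complex.imCLM.hasFDerivAt).comp_hasDerivAt τ
      (h1'.mul h2)).const_mul (2⁻¹ : ℝ)).sub h3
  have hAH : AH Γ (s, Γ.φ s w) (0, u) = ((starRingEnd ℂ) u * A Γ (s, w) (1, 0)).im := by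
    rw [A_t_eq Γ s w]; exact (KI Γ s (Γ.φ s w) u).symm
  have key : 2⁻¹ * (((starRingEnd ℂ) u * A Γ (s, w) (1, 0) +
        (starRingEnd ℂ) (Γ.φ s w) * S Γ (s, w) (0, v) (1, 0)).im)
        - AH Γ (s, Γ.φ s w) (0, u) = Gfun Γ z v s τ := by
    rw [hAH, Ssymm Γ (s, w) (0, v) (1, 0)]
    simp only [Gfun, ← hwdef, ← hudef, Complex.add_im,
      im_conj_swap (A Γ (s, w) (1, 0)) u]
    ring
  rw [← key]
  exact h4

end HamCal

namespace HamCal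

variable (Γ : HamIsotopy)

lemma contGam_t (z : ℂ) : Continuous fun s => gam Γ s z :=
  (contGam Γ).comp (continuous_id.prodMk continuous_const)

set_option maxHeartbeats 1000000 in
lemma inc (z v : ℂ) :
    F Γ (z + v) - F Γ z = ∫ τ in (0:ℝ)..1, (P Γ z v 1 τ - P Γ z v 0 τ) := by
  have contG := contGfun Γ z v
  have hGs : ∀ s : ℝ, Continuous fun τ => Gfun Γ z v s τ :=
    fun s => contG.comp (continuous_const.prodMk continuous_id)
  have hGτ : ∀ τ : ℝ, Continuous fun s => Gfun Γ z v s τ :=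
    fun τ => contG.comp (continuous_id.prodMk continuous_const)
  have h1 : ∀ s : ℝ, gam Γ s (z + v) - gam Γ s z = ∫ τ in (0:ℝ)..1, Gfun Γ z v s τ := by
    intro s
    have := intervalIntegral.integral_eq_sub_of_hasDerivAt
      (f := fun τ => gam Γ s (z + τ • v)) (f' := fun τ => Gfun Γ z v s τ)
      (fun τ _ => hg_τ Γ z v s τ) ((hGs s).intervalIntegrable 0 1)
    simpa using this.symm
  have h2 : ∀ τ : ℝ, (∫ s in (0:ℝ)..1, Gfun Γ z v s τ) = P Γ z v 1 τ - P Γ z v 0 τ := by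
    intro τ
    exact intervalIntegral.integral_eq_sub_of_hasDerivAt
      (fun s _ => hP_s Γ z v s τ) ((hGτ τ).intervalIntegrable 0 1)
  have hint1 : IntervalIntegrable (fun s => gam Γ s (z + v)) volume 0 1 :=
    (contGam_t Γ (z + v)).intervalIntegrable 0 1
  have hint2 : IntervalIntegrable (fun s => gam Γ s z) volume 0 1 :=
    (contGam_t Γ z).intervalIntegrable 0 1
  have hF : F Γ (z + v) - F Γ z = ∫ s in (0:ℝ)..1, (gam Γ s (z + v) - gam Γ s z) := by
    rw [F, F, ← intervalIntegral.integral_sub hint1 hint2]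
  -- Fubini on [0,1]²
  have hIntProd : Integrable (fun q : ℝ × ℝ => Gfun Γ z v q.1 q.2)
      ((volume.restrict (Set.Ioc (0:ℝ) 1)).prod (volume.restrict (Set.Ioc (0:ℝ) 1))) := by
    rw [Measure.prod_restrict]
    have hcmp : IsCompact (Set.Icc (0:ℝ) 1 ×ˢ Set.Icc (0:ℝ) 1) :=
      isCompact_Icc.prod isCompact_Icc
    have : IntegrableOn (fun q : ℝ × ℝ => Gfun Γ z v q.1 q.2)
        (Set.Icc (0:ℝ) 1 ×ˢ Set.Icc (0:ℝ) 1) volume :=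
      (contGfun Γ z v).continuousOn.integrableOn_compact hcmp
    exact this.mono_set (Set.prod_mono Set.Ioc_subset_Icc_self Set.Ioc_subset_Icc_self)
  have hswap : (∫ s in Set.Ioc (0:ℝ) 1, ∫ τ in Set.Ioc (0:ℝ) 1, Gfun Γ z v s τ)
      = ∫ τ in Set.Ioc (0:ℝ) 1, ∫ s in Set.Ioc (0:ℝ) 1, Gfun Γ z v s τ :=
    MeasureTheory.integral_integral_swap hIntProd
  have e01 : (0:ℝ) ≤ 1 := by norm_num
  calc F Γ (z + v) - F Γ z
      = ∫ s in (0:ℝ)..1, (gam Γ s (z + v) - gam Γ s z) := hF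
    _ = ∫ s in (0:ℝ)..1, ∫ τ in (0:ℝ)..1, Gfun Γ z v s τ := by
        exact intervalIntegral.integral_congr (fun s _ => h1 s)
    _ = ∫ s in Set.Ioc (0:ℝ) 1, ∫ τ in (0:ℝ)..1, Gfun Γ z v s τ :=
        intervalIntegral.integral_of_le e01
    _ = ∫ s in Set.Ioc (0:ℝ) 1, ∫ τ in Set.Ioc (0:ℝ) 1, Gfun Γ z v s τ := by
        refine setIntegral_congr_fun measurableSet_Ioc (fun s _ => ?_)
        exact intervalIntegral.integral_of_le e01
    _ = ∫ τ in Set.Ioc (0:ℝ) 1, ∫ s in Set.Ioc (0:ℝ) 1, Gfun Γ z v s τ := hswap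
    _ = ∫ τ in Set.Ioc (0:ℝ) 1, ∫ s in (0:ℝ)..1, Gfun Γ z v s τ := by
        refine setIntegral_congr_fun measurableSet_Ioc (fun τ _ => ?_)
        exact (intervalIntegral.integral_of_le e01).symm
    _ = ∫ τ in Set.Ioc (0:ℝ) 1, (P Γ z v 1 τ - P Γ z v 0 τ) := by
        refine setIntegral_congr_fun measurableSet_Ioc (fun τ _ => ?_)
        exact h2 τ
    _ = ∫ τ in (0:ℝ)..1, (P Γ z v 1 τ - P Γ z v 0 τ) :=
        (intervalIntegral.integral_of_le e01).symm

lemma A_zero_space (w v : ℂ) : A Γ (0, w) (0, v) = v := by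
  have h := hPsi_z Γ 0 w
  rw [Γ.init] at h
  have h2 : ((A Γ (0, w)).comp (ContinuousLinearMap.inr ℝ ℝ ℂ))
      = ContinuousLinearMap.id ℝ ℂ := h.unique (hasFDerivAt_id w)
  simpa using congrArg (fun (L : ℂ →L[ℝ] ℂ) => L v) h2

noncomputable def NL (f : ℂ → ℂ) (w : ℂ) : ℂ →L[ℝ] ℂ :=
  ((ContinuousLinearMap.mul ℝ ℂ) ((starRingEnd ℂ) (f w))).comp (fderiv ℝ f w) -
    (ContinuousLinearMap.mul ℝ ℂ) ((starRingEnd ℂ) w)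

noncomputable def Lmap (f : ℂ → ℂ) (w : ℂ) : ℂ →L[ℝ] ℝ :=
  (2⁻¹ : ℝ) • (Complex.imCLM.comp (NL f w))

lemma Lmap_apply (f : ℂ → ℂ) (w v : ℂ) :
    Lmap f w v = 2⁻¹ * (((starRingEnd ℂ) (f w) * fderiv ℝ f w v).im
      - ((starRingEnd ℂ) w * v).im) := by
  simp [Lmap, NL]

lemma contLmap (f : ℂ → ℂ) (hf : ContDiff ℝ (⊤ : ℕ∞) f) : Continuous fun w => Lmap f w := by
  have h1 : Continuous fun w => (ContinuousLinearMap.mul ℝ ℂ) ((starRingEnd ℂ) (f w)) :=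
    (ContinuousLinearMap.mul ℝ ℂ).continuous.comp (Complex.continuous_conj.comp hf.continuous)
  have h2 : Continuous fun w => fderiv ℝ f w := hf.continuous_fderiv (by simp)
  have h3 : Continuous fun w =>
      ((ContinuousLinearMap.mul ℝ ℂ) ((starRingEnd ℂ) (f w))).comp (fderiv ℝ f w) :=
    (((ContinuousLinearMap.compL ℝ ℂ ℂ ℂ).continuous.comp h1).clm_apply h2)
  have h4 : Continuous fun w => (ContinuousLinearMap.mul ℝ ℂ) ((starRingEnd ℂ) w) :=
    (ContinuousLinearMap.mul ℝ ℂ).continuous.comp Complex.continuous_conj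
  have h5 : Continuous fun w => NL f w := h3.sub h4
  have h6 : Continuous fun w => Complex.imCLM.comp (NL f w) :=
    ((ContinuousLinearMap.compL ℝ ℂ ℂ ℝ) Complex.imCLM).continuous.comp h5
  exact (continuous_const (y := (2⁻¹ : ℝ))).smul h6

lemma contDiff_phi (t : ℝ) : ContDiff ℝ (⊤ : ℕ∞) (Γ.φ t) :=
  Γ.smooth_φ.comp (contDiff_const.prodMk contDiff_id)

lemma inc' (z v : ℂ) :
    F Γ (z + v) - F Γ z = ∫ τ in (0:ℝ)..1, Lmap (Γ.φ 1) (z + τ • v) v := by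
  rw [inc Γ z v]
  refine intervalIntegral.integral_congr (fun τ _ => ?_)
  rw [Lmap_apply, P, P, Γ.init, fderiv_phi]
  simp only [id_eq, A_zero_space]
  ring

lemma hF_deriv (z : ℂ) : HasFDerivAt (F Γ) (Lmap (Γ.φ 1) z) z := by
  have hcont : Continuous fun w => Lmap (Γ.φ 1) w := contLmap _ (contDiff_phi Γ 1)
  rw [hasFDerivAt_iff_isLittleO_nhds_zero, Asymptotics.isLittleO_iff]
  intro c hc
  obtain ⟨δ, hδ, hball⟩ := Metric.continuousAt_iff.1 hcont.continuousAt c hc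
  filter_upwards [Metric.ball_mem_nhds (0:ℂ) hδ] with v hv
  have hInt : IntervalIntegrable (fun τ => Lmap (Γ.φ 1) (z + τ • v) v) volume 0 1 := by
    have : Continuous fun τ : ℝ => Lmap (Γ.φ 1) (z + τ • v) :=
      hcont.comp (continuous_const.add (continuous_id.smul continuous_const))
    exact (this.clm_apply continuous_const).intervalIntegrable 0 1
  have hrepr : F Γ (z + v) - F Γ z - Lmap (Γ.φ 1) z v
      = ∫ τ in (0:ℝ)..1, (Lmap (Γ.φ 1) (z + τ • v) v - Lmap (Γ.φ 1) z v) := by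
    rw [intervalIntegral.integral_sub hInt (intervalIntegrable_const), inc' Γ z v]
    simp
  rw [hrepr]
  have hb : ∀ τ ∈ Set.uIoc (0:ℝ) 1,
      ‖Lmap (Γ.φ 1) (z + τ • v) v - Lmap (Γ.φ 1) z v‖ ≤ c * ‖v‖ := by
    intro τ hτ
    rw [Set.uIoc_of_le (by norm_num : (0:ℝ) ≤ 1)] at hτ
    have hτ0 : 0 ≤ τ := le_of_lt hτ.1
    have hτ1 : τ ≤ 1 := hτ.2
    have hdist : dist (z + τ • v) z < δ := by
      rw [dist_eq_norm]
      have : ‖z + τ • v - z‖ = τ * ‖v‖ := by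
        rw [add_sub_cancel_left, norm_smul, Real.norm_eq_abs, abs_of_nonneg hτ0]
      rw [this]
      calc τ * ‖v‖ ≤ 1 * ‖v‖ := by
            exact mul_le_mul_of_nonneg_right hτ1 (norm_nonneg v)
        _ = ‖v‖ := one_mul _
        _ < δ := by simpa using hv
    have hnorm : ‖Lmap (Γ.φ 1) (z + τ • v) - Lmap (Γ.φ 1) z‖ ≤ c :=
      le_of_lt (by simpa [dist_eq_norm] using hball hdist)
    calc ‖Lmap (Γ.φ 1) (z + τ • v) v - Lmap (Γ.φ 1) z v‖
        = ‖(Lmap (Γ.φ 1) (z + τ • v) - Lmap (Γ.φ 1) z) v‖ := by simp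
      _ ≤ ‖Lmap (Γ.φ 1) (z + τ • v) - Lmap (Γ.φ 1) z‖ * ‖v‖ :=
          ContinuousLinearMap.le_opNorm _ v
      _ ≤ c * ‖v‖ := mul_le_mul_of_nonneg_right hnorm (norm_nonneg v)
  calc ‖∫ τ in (0:ℝ)..1, (Lmap (Γ.φ 1) (z + τ • v) v - Lmap (Γ.φ 1) z v)‖
      ≤ (c * ‖v‖) * |1 - 0| := intervalIntegral.norm_integral_le_of_norm_le_const hb
    _ = c * ‖v‖ := by norm_num

lemma gam_far (t : ℝ) (z : ℂ) (hz : 1 ≤ ‖z‖) : gam Γ t z = 0 := by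
  obtain ⟨r, hr, hb⟩ := Γ.bdry
  have hrz : r ≤ ‖z‖ := le_trans (le_of_lt hr) hz
  have hφ : ∀ s, Γ.φ s z = z := fun s => (hb s z hrz).1
  have hAz : A Γ (t, z) (1, 0) = 0 := by
    have h1 : HasDerivAt (fun s => Γ.φ s z) (A Γ (t, z) (1, 0)) t := hPsi_t Γ t z
    have heq : (fun s => Γ.φ s z) = fun _ => z := funext hφ
    rw [heq] at h1
    exact h1.unique (hasDerivAt_const t z)
  rw [gam, hAz, hφ t, (hb t z hrz).2]
  simp

lemma F_far (z : ℂ) (hz : 1 ≤ ‖z‖) : F Γ z = 0 := by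
  rw [F]
  rw [intervalIntegral.integral_congr (g := fun _ => (0:ℝ)) (fun t _ => gam_far Γ t z hz)]
  simp

end HamCal

namespace HamCal

lemma Lmap_comp (f g : ℂ → ℂ) (hf : ContDiff ℝ (⊤ : ℕ∞) f) (hg : ContDiff ℝ (⊤ : ℕ∞) g) (z : ℂ) :
    Lmap (f ∘ g) z = (Lmap f (g z)).comp (fderiv ℝ g z) + Lmap g z := by
  ext v
  have hchain : fderiv ℝ (f ∘ g) z = (fderiv ℝ f (g z)).comp (fderiv ℝ g z) :=
    fderiv_comp z (hf.differentiable (by simp) (g z)) (hg.differentiable (by simp) z)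
  rw [ContinuousLinearMap.add_apply, ContinuousLinearMap.comp_apply]
  rw [Lmap_apply, Lmap_apply, Lmap_apply, hchain]
  simp only [Function.comp_apply, ContinuousLinearMap.comp_apply]
  ring

lemma abs_two : ‖(2:ℂ)‖ = 2 := by
  simp

lemma phi_two (Γ : HamIsotopy) (t : ℝ) : Γ.φ t 2 = 2 := by
  obtain ⟨r, hr, hb⟩ := Γ.bdry
  exact (hb t 2 (by rw [abs_two]; linarith)).1

lemma cocycle (Γ₁ Γ₂ Γ₃ : HamIsotopy) (h : Γ₃.φ 1 = Γ₁.φ 1 ∘ Γ₂.φ 1) :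
    ∀ z, F Γ₃ z = F Γ₁ (Γ₂.φ 1 z) + F Γ₂ z := by
  have h1 := contDiff_phi Γ₁ 1
  have h2 := contDiff_phi Γ₂ 1
  set u : ℂ → ℝ := fun z => F Γ₃ z - (F Γ₁ (Γ₂.φ 1 z) + F Γ₂ z) with hu_def
  have hu : ∀ z, HasFDerivAt u (0 : ℂ →L[ℝ] ℝ) z := by
    intro z
    have d1 : HasFDerivAt (fun z => F Γ₁ (Γ₂.φ 1 z))
        ((Lmap (Γ₁.φ 1) (Γ₂.φ 1 z)).comp (fderiv ℝ (Γ₂.φ 1) z)) z :=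
      (hF_deriv Γ₁ (Γ₂.φ 1 z)).comp z ((h2.differentiable (by simp) z).hasFDerivAt)
    have hsum := (hF_deriv Γ₃ z).sub (d1.add (hF_deriv Γ₂ z))
    have hzero : Lmap (Γ₃.φ 1) z
        - ((Lmap (Γ₁.φ 1) (Γ₂.φ 1 z)).comp (fderiv ℝ (Γ₂.φ 1) z) + Lmap (Γ₂.φ 1) z) = 0 := by
      rw [h, Lmap_comp _ _ h1 h2 z]
      abel
    rw [hzero] at hsum
    exact hsum
  have hconst := is_const_of_fderiv_eq_zero (𝕜 := ℝ) (f := u)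
    (fun z => (hu z).differentiableAt) (fun z => (hu z).fderiv)
  intro z
  have h2two : Γ₂.φ 1 (2:ℂ) = 2 := phi_two Γ₂ 1
  have habs : (1:ℝ) ≤ ‖(2:ℂ)‖ := by rw [abs_two]; linarith
  have hu2 : u 2 = 0 := by
    rw [hu_def]
    simp only [h2two]
    rw [F_far Γ₃ 2 habs, F_far Γ₁ 2 habs, F_far Γ₂ 2 habs]
    ring
  have := hconst z 2
  rw [hu2] at this
  have : F Γ₃ z - (F Γ₁ (Γ₂.φ 1 z) + F Γ₂ z) = 0 := this
  linarith

end HamCal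

namespace HamCal

variable (Γ : HamIsotopy)

noncomputable def Q1 (t : ℝ) (z : ℂ) : ℝ := z.re * AH Γ (t, z) (0, 1) + Γ.H t z
noncomputable def Q2 (t : ℝ) (z : ℂ) : ℝ := z.im * AH Γ (t, z) (0, Complex.I) + Γ.H t z
noncomputable def lam (t : ℝ) (w : ℂ) : ℝ := 2⁻¹ * AH Γ (t, w) (0, w)

lemma AH_decomp (t : ℝ) (w : ℂ) :
    AH Γ (t, w) (0, w) = Q1 Γ t w + Q2 Γ t w - 2 * Γ.H t w := by
  have hu : ((0 : ℝ), w) = w.re • ((0 : ℝ), (1 : ℂ)) + w.im • ((0 : ℝ), Complex.I) := by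
    simp [Prod.ext_iff, Complex.ext_iff]
  rw [hu, map_add, _root_.map_smul, _root_.map_smul, smul_eq_mul, smul_eq_mul, Q1, Q2]
  ring

lemma H_far (t : ℝ) (z : ℂ) (hz : 1 ≤ ‖z‖) : Γ.H t z = 0 := by
  obtain ⟨r, hr, hb⟩ := Γ.bdry
  exact (hb t z (le_trans (le_of_lt hr) hz)).2

lemma AH_far (t : ℝ) (z : ℂ) (hz : 1 < ‖z‖) : AH Γ (t, z) = 0 := by
  obtain ⟨r, hr, hb⟩ := Γ.bdry
  have hopen : IsOpen {p : ℝ × ℂ | r < ‖p.2‖} :=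
    isOpen_lt continuous_const (continuous_norm.comp continuous_snd)
  have hmem : (t, z) ∈ {p : ℝ × ℂ | r < ‖p.2‖} := lt_trans hr hz
  have hev : Th Γ =ᶠ[nhds (t, z)] (fun _ => (0 : ℝ)) := by
    refine Filter.eventuallyEq_of_mem (hopen.mem_nhds hmem) ?_
    intro p hp
    exact (hb p.1 p.2 (le_of_lt hp)).2
  calc AH Γ (t, z) = fderiv ℝ (fun _ => (0 : ℝ)) (t, z) := hev.fderiv_eq
    _ = 0 := fderiv_const_apply 0

lemma Q1_far (t : ℝ) (z : ℂ) (hz : 1 < ‖z‖) : Q1 Γ t z = 0 := by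
  rw [Q1, AH_far Γ t z hz, H_far Γ t z (le_of_lt hz)]
  simp

lemma Q2_far (t : ℝ) (z : ℂ) (hz : 1 < ‖z‖) : Q2 Γ t z = 0 := by
  rw [Q2, AH_far Γ t z hz, H_far Γ t z (le_of_lt hz)]
  simp

lemma contH_t (t : ℝ) : Continuous (Γ.H t) :=
  (contTh Γ).comp (continuous_const.prodMk continuous_id)

lemma contAH_t (t : ℝ) : Continuous fun z : ℂ => AH Γ (t, z) :=
  (contAH Γ).comp (continuous_const.prodMk continuous_id)

lemma contQ1 (t : ℝ) : Continuous (Q1 Γ t) :=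
  ((Complex.continuous_re.mul ((contAH_t Γ t).clm_apply continuous_const)).add (contH_t Γ t))

lemma contQ2 (t : ℝ) : Continuous (Q2 Γ t) :=
  ((Complex.continuous_im.mul ((contAH_t Γ t).clm_apply continuous_const)).add (contH_t Γ t))

lemma intQ1_line (t : ℝ) (y : ℝ) : ∫ x : ℝ, Q1 Γ t ((x : ℂ) + (y : ℂ) * Complex.I) = 0 := by
  set L : ℝ → ℂ := fun x => (x : ℂ) + (y : ℂ) * Complex.I with hL
  have hre : ∀ x, (L x).re = x := by intro x; simp [hL]
  have habs : ∀ x : ℝ, 2 ≤ |x| → 1 < ‖L x‖ := by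
    intro x hx
    calc (1:ℝ) < 2 := one_lt_two
      _ ≤ |x| := hx
      _ = |(L x).re| := by rw [hre]
      _ ≤ ‖L x‖ := Complex.abs_re_le_norm _
  have hLcont : Continuous L := by
    exact (Complex.continuous_ofReal).add continuous_const
  have hderiv : ∀ x : ℝ, HasDerivAt (fun x' => x' * Γ.H t (L x')) (Q1 Γ t (L x)) x := by
    intro x
    have hline : HasDerivAt L 1 x := by
      have h0 : HasDerivAt (fun x' : ℝ => ((x' : ℂ))) (1 : ℂ) x := by
        simpa using (hasDerivAt_id x).ofReal_comp
      simpa [hL] using h0.add_const ((y : ℂ) * Complex.I)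
    have hH : HasDerivAt (fun x' : ℝ => Γ.H t (L x')) (AH Γ (t, L x) (0, 1)) x := by
      simpa [Function.comp_def] using (hH_z Γ t (L x)).comp_hasDerivAt x hline
    have hmul := (hasDerivAt_id x).mul hH
    have : Q1 Γ t (L x) = 1 * Γ.H t (L x) + x * AH Γ (t, L x) (0, 1) := by
      rw [Q1, hre]; ring
    rw [this]
    simpa [Pi.mul_def] using hmul
  have hcont : Continuous fun x => Q1 Γ t (L x) := (contQ1 Γ t).comp hLcont
  have hzero : ∀ x : ℝ, x ∉ Set.Ioc (-2 : ℝ) 2 → Q1 Γ t (L x) = 0 := by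
    intro x hx
    simp only [Set.mem_Ioc, not_and_or, not_lt, not_le] at hx
    have h2 : 2 ≤ |x| := by
      rcases hx with hx | hx
      · rw [abs_of_nonpos (by linarith)]; linarith
      · rw [abs_of_pos (by linarith)]; linarith
    exact Q1_far Γ t (L x) (habs x h2)
  calc ∫ x : ℝ, Q1 Γ t (L x)
      = ∫ x in Set.Ioc (-2 : ℝ) 2, Q1 Γ t (L x) :=
        (setIntegral_eq_integral_of_forall_compl_eq_zero hzero).symm
    _ = ∫ x in (-2 : ℝ)..2, Q1 Γ t (L x) :=
        (intervalIntegral.integral_of_le (by norm_num)).symm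
    _ = 2 * Γ.H t (L 2) - (-2) * Γ.H t (L (-2)) :=
        intervalIntegral.integral_eq_sub_of_hasDerivAt (fun x _ => hderiv x)
          (hcont.intervalIntegrable _ _)
    _ = 0 := by
        rw [H_far Γ t (L 2) (le_of_lt (habs 2 (by norm_num))),
          H_far Γ t (L (-2)) (le_of_lt (habs (-2) (by norm_num)))]
        ring

lemma intQ2_line (t : ℝ) (x : ℝ) : ∫ y : ℝ, Q2 Γ t ((x : ℂ) + (y : ℂ) * Complex.I) = 0 := by
  set L : ℝ → ℂ := fun y => (x : ℂ) + (y : ℂ) * Complex.I with hL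
  have him : ∀ y, (L y).im = y := by intro y; simp [hL]
  have habs : ∀ y : ℝ, 2 ≤ |y| → 1 < ‖L y‖ := by
    intro y hy
    calc (1:ℝ) < 2 := one_lt_two
      _ ≤ |y| := hy
      _ = |(L y).im| := by rw [him]
      _ ≤ ‖L y‖ := Complex.abs_im_le_norm _
  have hLcont : Continuous L :=
    continuous_const.add (Complex.continuous_ofReal.mul continuous_const)
  have hderiv : ∀ y : ℝ, HasDerivAt (fun y' => y' * Γ.H t (L y')) (Q2 Γ t (L y)) y := by
    intro y
    have hline : HasDerivAt L Complex.I y := by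
      have h0 : HasDerivAt (fun y' : ℝ => ((y' : ℂ))) (1 : ℂ) y := by
        simpa using (hasDerivAt_id y).ofReal_comp
      have h1 := (h0.mul_const Complex.I).const_add ((x : ℂ))
      simpa [hL] using h1
    have hH : HasDerivAt (fun y' : ℝ => Γ.H t (L y')) (AH Γ (t, L y) (0, Complex.I)) y := by
      simpa [Function.comp_def] using (hH_z Γ t (L y)).comp_hasDerivAt y hline
    have hmul := (hasDerivAt_id y).mul hH
    have : Q2 Γ t (L y) = 1 * Γ.H t (L y) + y * AH Γ (t, L y) (0, Complex.I) := by
      rw [Q2, him]; ring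
    rw [this]
    simpa [Pi.mul_def] using hmul
  have hcont : Continuous fun y => Q2 Γ t (L y) := (contQ2 Γ t).comp hLcont
  have hzero : ∀ y : ℝ, y ∉ Set.Ioc (-2 : ℝ) 2 → Q2 Γ t (L y) = 0 := by
    intro y hy
    simp only [Set.mem_Ioc, not_and_or, not_lt, not_le] at hy
    have h2 : 2 ≤ |y| := by
      rcases hy with hy | hy
      · rw [abs_of_nonpos (by linarith)]; linarith
      · rw [abs_of_pos (by linarith)]; linarith
    exact Q2_far Γ t (L y) (habs y h2)
  calc ∫ y : ℝ, Q2 Γ t (L y)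
      = ∫ y in Set.Ioc (-2 : ℝ) 2, Q2 Γ t (L y) :=
        (setIntegral_eq_integral_of_forall_compl_eq_zero hzero).symm
    _ = ∫ y in (-2 : ℝ)..2, Q2 Γ t (L y) :=
        (intervalIntegral.integral_of_le (by norm_num)).symm
    _ = 2 * Γ.H t (L 2) - (-2) * Γ.H t (L (-2)) :=
        intervalIntegral.integral_eq_sub_of_hasDerivAt (fun y _ => hderiv y)
          (hcont.intervalIntegrable _ _)
    _ = 0 := by
        rw [H_far Γ t (L 2) (le_of_lt (habs 2 (by norm_num))),
          H_far Γ t (L (-2)) (le_of_lt (habs (-2) (by norm_num)))]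
        ring

lemma norm_prod_le_abs (p : ℝ × ℝ) : ‖p‖ ≤ ‖(p.1 : ℂ) + (p.2 : ℂ) * Complex.I‖ := by
  set z : ℂ := (p.1 : ℂ) + (p.2 : ℂ) * Complex.I with hz
  have hre : z.re = p.1 := by simp [hz]
  have him : z.im = p.2 := by simp [hz]
  have h1 : |p.1| ≤ ‖z‖ := by rw [← hre]; exact Complex.abs_re_le_norm z
  have h2 : |p.2| ≤ ‖z‖ := by rw [← him]; exact Complex.abs_im_le_norm z
  rw [Prod.norm_def]
  simp only [Real.norm_eq_abs]
  exact max_le h1 h2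

lemma int_plane_zero (Q : ℂ → ℝ) (hQc : Continuous Q)
    (hQfar : ∀ z : ℂ, 1 < ‖z‖ → Q z = 0)
    (hline : (∀ y : ℝ, ∫ x : ℝ, Q ((x : ℂ) + (y : ℂ) * Complex.I) = 0) ∨
      (∀ x : ℝ, ∫ y : ℝ, Q ((x : ℂ) + (y : ℂ) * Complex.I) = 0)) :
    ∫ z : ℂ, Q z = 0 := by
  set Qf : ℝ × ℝ → ℝ := fun p => Q ((p.1 : ℂ) + (p.2 : ℂ) * Complex.I) with hQf
  have hQfc : Continuous Qf := by
    exact hQc.comp (Complex.continuous_ofReal.comp continuous_fst |>.add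
      ((Complex.continuous_ofReal.comp continuous_snd).mul continuous_const))
  have hQffar : ∀ p : ℝ × ℝ, p ∉ Metric.closedBall (0 : ℝ × ℝ) 2 → Qf p = 0 := by
    intro p hp
    rw [Metric.mem_closedBall, dist_zero_right, not_le] at hp
    exact hQfar _ (lt_of_lt_of_le (lt_of_lt_of_le one_lt_two (le_of_lt hp))
      (norm_prod_le_abs p))
  have hcs : HasCompactSupport Qf :=
    HasCompactSupport.intro (isCompact_closedBall _ _) hQffar
  have hint : Integrable Qf volume := hQfc.integrable_of_hasCompactSupport hcs
  have htrans : ∫ p : ℝ × ℝ, Qf p = ∫ z : ℂ, Q z := by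
    have hmp := Complex.volume_preserving_equiv_real_prod.symm
    have := hmp.integral_comp Complex.measurableEquivRealProd.symm.measurableEmbedding Q
    rw [← this]
    refine integral_congr_ae (Filter.Eventually.of_forall fun p => ?_)
    simp only [hQf, Complex.measurableEquivRealProd_symm_apply, Complex.mk_eq_add_mul_I]
  rw [← htrans]
  have hint' : Integrable Qf (volume.prod volume) := by
    rwa [← Measure.volume_eq_prod]
  have hiter : ∫ p : ℝ × ℝ, Qf p = ∫ x : ℝ, ∫ y : ℝ, Qf (x, y) := by
    rw [Measure.volume_eq_prod]
    exact integral_prod _ hint'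
  rcases hline with hline | hline
  · rw [hiter, integral_integral_swap hint']
    simp only [hQf]
    rw [integral_congr_ae (Filter.Eventually.of_forall fun y => hline y)]
    simp
  · rw [hiter]
    simp only [hQf]
    rw [integral_congr_ae (Filter.Eventually.of_forall fun x => hline x)]
    simp

lemma not_mem_Disc {z : ℂ} (hz : z ∉ Disc) : 1 < ‖z‖ := by
  rw [Disc, Metric.mem_closedBall, dist_zero_right, not_le] at hz
  simpa using hz

lemma intDisc_Q1 (t : ℝ) : ∫ z in Disc, Q1 Γ t z = 0 := by
  rw [setIntegral_eq_integral_of_forall_compl_eq_zero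
    (fun z hz => Q1_far Γ t z (not_mem_Disc hz))]
  exact int_plane_zero (Q1 Γ t) (contQ1 Γ t) (Q1_far Γ t) (Or.inl (intQ1_line Γ t))

lemma intDisc_Q2 (t : ℝ) : ∫ z in Disc, Q2 Γ t z = 0 := by
  rw [setIntegral_eq_integral_of_forall_compl_eq_zero
    (fun z hz => Q2_far Γ t z (not_mem_Disc hz))]
  exact int_plane_zero (Q2 Γ t) (contQ2 Γ t) (Q2_far Γ t) (Or.inr (intQ2_line Γ t))

lemma gam_eq (t : ℝ) (z : ℂ) :
    gam Γ t z = lam Γ t (Γ.φ t z) - Γ.H t (Γ.φ t z) := by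
  rw [gam, A_t_eq Γ t z, lam, KI Γ t (Γ.φ t z) (Γ.φ t z)]

lemma cont_lam (t : ℝ) : Continuous (lam Γ t) := by
  refine continuous_const.mul ?_
  exact (contAH_t Γ t).clm_apply (continuous_const.prodMk continuous_id)

lemma change_vars (t : ℝ) (f : ℂ → ℝ) (hf : Continuous f) :
    ∫ z in Disc, f (Γ.φ t z) = ∫ w in Disc, f w := by
  have hmap := (Γ.measPres t).map_eq
  calc ∫ z in Disc, f (Γ.φ t z)
      = ∫ w, f w ∂(Measure.map (Γ.φ t) (volume.restrict Disc)) :=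
        (integral_map ((contDiff_phi Γ t).continuous.measurable.aemeasurable)
          hf.aestronglyMeasurable).symm
    _ = ∫ w in Disc, f w := by rw [hmap]

lemma isCompact_Disc : IsCompact Disc := isCompact_closedBall _ _

lemma measurableSet_Disc : MeasurableSet Disc := measurableSet_closedBall

lemma intDisc_gam (t : ℝ) :
    ∫ z in Disc, gam Γ t z = -2 * ∫ z in Disc, Γ.H t z := by
  have h1 : ∫ z in Disc, gam Γ t z = ∫ w in Disc, (lam Γ t w - Γ.H t w) := by
    rw [setIntegral_congr_fun measurableSet_Disc (fun z _ => gam_eq Γ t z)]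
    exact change_vars Γ t _ ((cont_lam Γ t).sub (contH_t Γ t))
  have hIntH : IntegrableOn (Γ.H t) Disc volume :=
    (contH_t Γ t).continuousOn.integrableOn_compact isCompact_Disc
  have hIntQ1 : IntegrableOn (Q1 Γ t) Disc volume :=
    (contQ1 Γ t).continuousOn.integrableOn_compact isCompact_Disc
  have hIntQ2 : IntegrableOn (Q2 Γ t) Disc volume :=
    (contQ2 Γ t).continuousOn.integrableOn_compact isCompact_Disc
  have hlam_eq : ∀ w, lam Γ t w - Γ.H t w
      = 2⁻¹ * Q1 Γ t w + 2⁻¹ * Q2 Γ t w - 2 * Γ.H t w := by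
    intro w
    rw [lam, AH_decomp]
    ring
  have hf : MeasureTheory.IntegrableOn (fun x => 2⁻¹ * Q1 Γ t x + 2⁻¹ * Q2 Γ t x) Disc volume := by
    exact (hIntQ1.const_mul _).add (hIntQ2.const_mul _)
  have hg : MeasureTheory.IntegrableOn (fun x => 2 * Γ.H t x) Disc volume := by
    exact hIntH.const_mul _
  have ha : MeasureTheory.IntegrableOn (fun x => 2⁻¹ * Q1 Γ t x) Disc volume := by
    exact hIntQ1.const_mul _
  have hb : MeasureTheory.IntegrableOn (fun x => 2⁻¹ * Q2 Γ t x) Disc volume := by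
    exact hIntQ2.const_mul _
  rw [h1, setIntegral_congr_fun measurableSet_Disc (fun w _ => hlam_eq w)]
  rw [integral_sub hf hg, integral_add ha hb]
  rw [integral_const_mul, integral_const_mul, integral_const_mul]
  rw [intDisc_Q1, intDisc_Q2]
  ring

lemma intDisc_F :
    ∫ z in Disc, F Γ z = -2 * ∫ t in (0:ℝ)..1, ∫ z in Disc, Γ.H t z := by
  have e01 : (0:ℝ) ≤ 1 := by norm_num
  calc ∫ z in Disc, F Γ z
      = ∫ z in Disc, ∫ t in Set.Ioc (0:ℝ) 1, gam Γ t z := by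
        refine setIntegral_congr_fun measurableSet_Disc (fun z _ => ?_)
        rw [F, intervalIntegral.integral_of_le e01]
    _ = ∫ t in Set.Ioc (0:ℝ) 1, ∫ z in Disc, gam Γ t z := by
        refine integral_integral_swap ?_
        rw [Measure.prod_restrict]
        have hc : IntegrableOn (fun q : ℂ × ℝ => gam Γ q.2 q.1)
            (Disc ×ˢ Set.Icc (0:ℝ) 1) volume :=
          ((contGam Γ).comp (continuous_snd.prodMk continuous_fst)).continuousOn.integrableOn_compact
            (isCompact_Disc.prod isCompact_Icc)
        exact hc.mono_set (Set.prod_mono subset_rfl Set.Ioc_subset_Icc_self)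
    _ = ∫ t in Set.Ioc (0:ℝ) 1, (-2) * ∫ z in Disc, Γ.H t z :=
        setIntegral_congr_fun measurableSet_Ioc (fun t _ => intDisc_gam Γ t)
    _ = (-2) * ∫ t in Set.Ioc (0:ℝ) 1, ∫ z in Disc, Γ.H t z := integral_const_mul _ _
    _ = -2 * ∫ t in (0:ℝ)..1, ∫ z in Disc, Γ.H t z := by
        rw [intervalIntegral.integral_of_le e01]

end HamCal

namespace HamCal

lemma contF (Γ : HamIsotopy) : Continuous (F Γ) := by
  have hd : Differentiable ℝ (F Γ) := fun z => (hF_deriv Γ z).differentiableAt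
  exact hd.continuous

lemma intDisc_F_cal (Γ : HamIsotopy) : ∫ z in Disc, F Γ z = -2 * Cal Γ := by
  rw [Cal]
  exact intDisc_F Γ

end HamCal

/-- The Calabi invariant is a homomorphism: it only depends on the time-one map,
and composition of time-one maps adds Calabi invariants. -/
theorem stmt_11 (Γ₁ Γ₂ Γ₃ : HamIsotopy) (h : Γ₃.φ 1 = Γ₁.φ 1 ∘ Γ₂.φ 1) :
    Cal Γ₃ = Cal Γ₁ + Cal Γ₂ := by
  have h1 := HamCal.intDisc_F_cal Γ₁
  have h2 := HamCal.intDisc_F_cal Γ₂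
  have h3 := HamCal.intDisc_F_cal Γ₃
  have hco := HamCal.cocycle Γ₁ Γ₂ Γ₃ h
  have hInt1 : MeasureTheory.IntegrableOn (fun z => HamCal.F Γ₁ (Γ₂.φ 1 z)) Disc volume :=
    ((HamCal.contF Γ₁).comp
      (HamCal.contDiff_phi Γ₂ 1).continuous).continuousOn.integrableOn_compact
      HamCal.isCompact_Disc
  have hInt2 : MeasureTheory.IntegrableOn (HamCal.F Γ₂) Disc volume :=
    (HamCal.contF Γ₂).continuousOn.integrableOn_compact HamCal.isCompact_Disc
  have hsplit : ∫ z in Disc, HamCal.F Γ₃ z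
      = (∫ z in Disc, HamCal.F Γ₁ (Γ₂.φ 1 z)) + ∫ z in Disc, HamCal.F Γ₂ z := by
    rw [setIntegral_congr_fun HamCal.measurableSet_Disc (fun z _ => hco z)]
    exact integral_add hInt1 hInt2
  have hmapF : ∫ z in Disc, HamCal.F Γ₁ (Γ₂.φ 1 z) = ∫ w in Disc, HamCal.F Γ₁ w :=
    HamCal.change_vars Γ₂ 1 (HamCal.F Γ₁) (HamCal.contF Γ₁)
  have hfin : -2 * Cal Γ₃ = -2 * Cal Γ₁ + -2 * Cal Γ₂ := by
    rw [← h3, ← h1, ← h2, hsplit, hmapF]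
  linarith
end

section
/- The average rotation number Φ : Ham_c(D, ω) → ℝ, defined by Φ(φ) = ∫_{X₂} dm²(x) ∫_{φ_t·x} θ, is well-defined (independent of the choice of Hamiltonian isotopy from id to φ) and is a group homomorphism. -/
open MeasureTheory

namespace Stmt12

open Complex Set intervalIntegral

/-! ### Generic helper lemmas -/

lemma slice_cont_t {f : ℝ → ℂ → ℂ} (hf : Continuous fun q : ℝ × ℂ => f q.1 q.2) (z : ℂ) :
    Continuous fun t => f t z := hf.comp (continuous_id.prodMk continuous_const)

lemma slice_cont_z {f : ℝ → ℂ → ℂ} (hf : Continuous fun q : ℝ × ℂ => f q.1 q.2) (t : ℝ) :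
    Continuous (f t) := hf.comp (continuous_const.prodMk continuous_id)

lemma cont_VD {f g : ℝ → ℂ → ℂ} (hf : Continuous fun q : ℝ × ℂ => f q.1 q.2)
    (hg : Continuous fun q : ℝ × ℂ => g q.1 q.2) (z : ℂ) :
    Continuous fun t => f t (g t z) :=
  hf.comp (continuous_id.prodMk (slice_cont_t hg z))

/-- the exponential formula for a nonvanishing `C¹` path. -/
lemma exp_formula (V D : ℝ → ℂ) (hV : Continuous V) (hDc : Continuous D)
    (hDd : ∀ t, HasDerivAt D (V t) t) (h : ∀ t, D t ≠ 0) :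
    Complex.exp (∫ t in (0:ℝ)..1, V t / D t) * D 0 = D 1 := by
  have hq : Continuous fun t => V t / D t := hV.div hDc h
  set P : ℝ → ℂ := fun u => ∫ s in (0:ℝ)..u, V s / D s with hP
  have hPd : ∀ t, HasDerivAt P (V t / D t) t := by
    intro t
    exact integral_hasDerivAt_right (hq.intervalIntegrable _ _)
      (hq.stronglyMeasurableAtFilter _ _) hq.continuousAt
  set g : ℝ → ℂ := fun t => D t * Complex.exp (-P t) with hg
  have hgd : ∀ t, HasDerivAt g 0 t := by
    intro t
    have h1 : HasDerivAt (fun t => Complex.exp (-P t)) (Complex.exp (-P t) * (-(V t / D t))) t :=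
      (hPd t).neg.cexp
    have h2 := (hDd t).mul h1
    refine h2.congr_deriv ?_
    rw [mul_neg, mul_neg, mul_div_assoc', mul_comm (D t) _, div_mul_cancel₀ _ (h t)]
    ring
  have hconst : g 1 = g 0 :=
    is_const_of_deriv_eq_zero (fun t => (hgd t).differentiableAt) (fun t => (hgd t).deriv) 1 0
  have hg0 : g 0 = D 0 := by simp [hg, hP]
  have hg1 : g 1 = D 1 * Complex.exp (-P 1) := rfl
  rw [hg0, hg1] at hconst
  rw [← hconst, Complex.exp_neg]
  field_simp [Complex.exp_ne_zero]
  simp only [hP]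
  ring

/-- parametric continuity of interval integrals with a uniform bound. -/
lemma contOn_param {X : Type*} [TopologicalSpace X] [FirstCountableTopology X]
    (F : X → ℝ → ℝ) (S : Set X) (L : ℝ)
    (hmeas : ∀ p ∈ S, Continuous (F p))
    (hbnd : ∀ p ∈ S, ∀ t ∈ Set.uIoc (0:ℝ) 1, |F p t| ≤ L)
    (hcont : ∀ t, ∀ p₀ ∈ S, ContinuousAt (fun p => F p t) p₀) :
    ContinuousOn (fun p => ∫ t in (0:ℝ)..1, F p t) S := by
  intro p₀ hp₀
  apply intervalIntegral.continuousWithinAt_of_dominated_interval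
    (bound := fun _ => L) (μ := volume)
  · filter_upwards [self_mem_nhdsWithin] with p hp
    exact (hmeas p hp).aestronglyMeasurable
  · filter_upwards [self_mem_nhdsWithin] with p hp
    exact Filter.Eventually.of_forall (fun t ht => by
      simpa [Real.norm_eq_abs] using hbnd p hp t ht)
  · exact intervalIntegrable_const
  · exact Filter.Eventually.of_forall (fun t _ => (hcont t p₀ hp₀).continuousWithinAt)

/-- the diagonal of `ℂ × ℂ` is Lebesgue-null. -/
lemma diag_null : volume {p : ℂ × ℂ | p.1 = p.2} = 0 := by
  have hinst : (volume : Measure (ℂ × ℂ)).IsAddHaarMeasure := by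
    rw [Measure.volume_eq_prod]; infer_instance
  have h : {p : ℂ × ℂ | p.1 = p.2} =
      (LinearMap.ker (LinearMap.fst ℝ ℂ ℂ - LinearMap.snd ℝ ℂ ℂ) : Submodule ℝ (ℂ × ℂ)) := by
    ext p; simp [LinearMap.mem_ker, sub_eq_zero, eq_comm]
  rw [h]
  apply Measure.addHaar_submodule
  intro htop
  have : ((1:ℂ), (0:ℂ)) ∈ LinearMap.ker (LinearMap.fst ℝ ℂ ℂ - LinearMap.snd ℝ ℂ ℂ) :=
    htop ▸ Submodule.mem_top
  simp [LinearMap.mem_ker, sub_eq_zero] at this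

lemma discProd_lt_top : volume (Disc ×ˢ Disc) < ⊤ := by
  rw [Disc, Measure.volume_eq_prod, Measure.prod_prod]
  exact ENNReal.mul_lt_top measure_closedBall_lt_top measure_closedBall_lt_top

/-- pigeonhole: some point of modulus `s` avoids the ray `{z + u d : u ≥ 1}`. -/
lemma exists_pt (s : ℝ) (hs : 0 < s) (z d : ℂ) :
    ∃ w : ℂ, ‖w‖ = s ∧ ∀ u : ℝ, 1 ≤ u → w ≠ z + (u:ℂ) * d := by
  by_contra hcon
  push_neg at hcon
  obtain ⟨u₁, _, h₁⟩ := hcon (s:ℂ) (by simpa using le_of_lt hs)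
  obtain ⟨u₂, _, h₂⟩ := hcon ((s:ℂ) * I) (by simp [abs_of_pos hs])
  obtain ⟨u₃, _, h₃⟩ := hcon (-(s:ℂ)) (by simpa using le_of_lt hs)
  have e1 : ((u₁ - u₃ : ℝ):ℂ) * d = 2 * (s:ℂ) := by push_cast; linear_combination h₃ - h₁
  have e2 : ((u₂ - u₃ : ℝ):ℂ) * d = (s:ℂ) * I + (s:ℂ) := by push_cast; linear_combination h₃ - h₂
  have key : ((u₂ - u₃ : ℝ):ℂ) * (2 * (s:ℂ)) = ((u₁ - u₃ : ℝ):ℂ) * ((s:ℂ) * I + (s:ℂ)) := by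
    push_cast at *
    linear_combination ((u₁:ℂ) - u₃) * e2 - ((u₂:ℂ) - u₃) * e1
  have him := congrArg Complex.im key
  simp [Complex.mul_im] at him
  have hu : u₁ - u₃ = 0 := by
    rcases him with h | h
    · exact h
    · exact absurd h (ne_of_gt hs)
  rw [hu] at e1
  simp at e1
  exact absurd (by exact_mod_cast e1 : s = 0) (ne_of_gt hs)

/-- a preconnected subset of `2πℤ` is a singleton. -/
lemma int_preconn {A : Set ℝ} (hA : IsPreconnected A)
    (hint : ∀ x ∈ A, ∃ k : ℤ, x = 2 * Real.pi * k) :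
    ∀ a ∈ A, ∀ b ∈ A, a = b := by
  have hpi := Real.pi_pos
  intro a ha b hb
  by_contra hne
  wlog hab : a < b generalizing a b
  · exact this b hb a ha (Ne.symm hne) (lt_of_le_of_ne (not_lt.1 hab) (Ne.symm hne))
  obtain ⟨m, hm⟩ := hint a ha
  obtain ⟨n, hn⟩ := hint b hb
  have hmn : m < n := by
    have : 2 * Real.pi * m < 2 * Real.pi * n := by rw [← hm, ← hn]; exact hab
    exact_mod_cast lt_of_mul_lt_mul_left this (by positivity)
  have hx : 2 * Real.pi * m + Real.pi ∈ Icc a b := by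
    constructor
    · rw [hm]; linarith
    · rw [hn]
      have : (m:ℝ) + 1 ≤ n := by exact_mod_cast hmn
      nlinarith
  have hxA : 2 * Real.pi * m + Real.pi ∈ A := hA.ordConnected.out ha hb hx
  obtain ⟨k, hk⟩ := hint _ hxA
  have h1 : (2 * m + 1 : ℝ) = 2 * k := by
    have h2 : Real.pi * (2 * m + 1) = Real.pi * (2 * k) := by ring_nf; ring_nf at hk; linarith
    exact mul_left_cancel₀ (ne_of_gt hpi) h2
  have h2 : (2 * m + 1 : ℤ) = 2 * k := by exact_mod_cast h1
  omega

/-! ### Basic objects -/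

/-- The time-dependent vector field generating the isotopy. -/
noncomputable def xi (Γ : HamIsotopy) (t : ℝ) (w : ℂ) : ℂ :=
  2 * Complex.I * wirtinger (fun z => (Γ.H t z : ℂ)) w

/-- difference of the two trajectories -/
noncomputable def Dl (Γ : HamIsotopy) (z1 z2 : ℂ) (t : ℝ) : ℂ := Γ.φ t z1 - Γ.φ t z2

/-- velocity of the difference -/
noncomputable def Vl (Γ : HamIsotopy) (z1 z2 : ℂ) (t : ℝ) : ℂ :=
  xi Γ t (Γ.φ t z1) - xi Γ t (Γ.φ t z2)

noncomputable def J (Γ : HamIsotopy) (z1 z2 : ℂ) : ℂ :=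
  ∫ t in (0:ℝ)..1, Vl Γ z1 z2 t / Dl Γ z1 z2 t

noncomputable def Ifun (Γ : HamIsotopy) (z1 z2 : ℂ) : ℝ :=
  ∫ t in (0:ℝ)..1, (Vl Γ z1 z2 t / Dl Γ z1 z2 t).im

/-- the off-diagonal configuration space -/
def S : Set (ℂ × ℂ) := (Disc ×ˢ Disc) ∩ {p | p.1 ≠ p.2}

lemma hasDerivAt_Dl (Γ : HamIsotopy) (z1 z2 : ℂ) (t : ℝ) :
    HasDerivAt (fun s => Γ.φ s z1 - Γ.φ s z2) (Vl Γ z1 z2 t) t :=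
  (Γ.flow t z1).sub (Γ.flow t z2)

lemma deriv_Dl (Γ : HamIsotopy) (z1 z2 : ℂ) :
    deriv (fun s => Γ.φ s z1 - Γ.φ s z2) = Vl Γ z1 z2 := by
  funext t; exact (hasDerivAt_Dl Γ z1 z2 t).deriv

lemma Phi_eq (Γ : HamIsotopy) :
    Phi Γ = ∫ p in Disc ×ˢ Disc, (1 / (2 * Real.pi)) * Ifun Γ p.1 p.2 := by
  unfold Phi Ifun
  simp only [deriv_Dl, Dl]

lemma Dl_ne_zero (Γ : HamIsotopy) {z1 z2 : ℂ} (h1 : z1 ∈ Disc) (h2 : z2 ∈ Disc)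
    (hne : z1 ≠ z2) (t : ℝ) : Dl Γ z1 z2 t ≠ 0 := by
  refine sub_ne_zero.2 (fun h => hne ((Γ.bij t).injOn h1 h2 h))

/-! ### Smoothness and continuity of the vector field -/

lemma contDiff_xi (Γ : HamIsotopy) : ContDiff ℝ (⊤ : ℕ∞) (fun q : ℝ × ℂ => xi Γ q.1 q.2) := by
  have hK : ContDiff ℝ (⊤ : ℕ∞) (fun p : ℝ × ℂ => ((Γ.H p.1 p.2 : ℝ) : ℂ)) :=
    Complex.ofRealCLM.contDiff.comp Γ.smooth_H
  have hA : ContDiff ℝ (⊤ : ℕ∞) (fun p : ℝ × ℂ => fderiv ℝ (fun p : ℝ × ℂ => ((Γ.H p.1 p.2 : ℝ) : ℂ)) p) :=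
    hK.fderiv_right (by simp)
  have key : ∀ t : ℝ, ∀ w : ℂ, (fderiv ℝ (fun z : ℂ => (Γ.H t z : ℂ)) w : ℂ →L[ℝ] ℂ) =
      (fderiv ℝ (fun p : ℝ × ℂ => ((Γ.H p.1 p.2 : ℝ) : ℂ)) (t, w)).comp
        (ContinuousLinearMap.inr ℝ ℝ ℂ) := by
    intro t w
    have hfd : HasFDerivAt (fun z : ℂ => (Γ.H t z : ℂ))
        ((fderiv ℝ (fun p : ℝ × ℂ => ((Γ.H p.1 p.2 : ℝ) : ℂ)) (t, w)).comp
          (ContinuousLinearMap.inr ℝ ℝ ℂ)) w :=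
      ((hK.differentiable (by simp) (t, w)).hasFDerivAt).comp w (hasFDerivAt_prodMk_right t w)
    exact hfd.fderiv
  have heq : (fun q : ℝ × ℂ => xi Γ q.1 q.2) =
      fun q : ℝ × ℂ => 2 * Complex.I *
        ((fderiv ℝ (fun p : ℝ × ℂ => ((Γ.H p.1 p.2 : ℝ) : ℂ)) q) ((0:ℝ), (1:ℂ)) +
          Complex.I * (fderiv ℝ (fun p : ℝ × ℂ => ((Γ.H p.1 p.2 : ℝ) : ℂ)) q) ((0:ℝ), Complex.I)) / 2 := by
    funext q
    rw [xi, wirtinger, key q.1 q.2]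
    simp [mul_div_assoc]
  rw [heq]
  apply ContDiff.div_const
  apply ContDiff.mul contDiff_const
  exact (hA.clm_apply contDiff_const).add (contDiff_const.mul (hA.clm_apply contDiff_const))

lemma continuous_phi (Γ : HamIsotopy) : Continuous (fun q : ℝ × ℂ => Γ.φ q.1 q.2) :=
  Γ.smooth_φ.continuous

lemma continuous_xi (Γ : HamIsotopy) : Continuous (fun q : ℝ × ℂ => xi Γ q.1 q.2) :=
  (contDiff_xi Γ).continuous

lemma continuous_Vl (Γ : HamIsotopy) (z1 z2 : ℂ) : Continuous (Vl Γ z1 z2) := by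
  unfold Vl
  exact (cont_VD (continuous_xi Γ) (continuous_phi Γ) z1).sub
    (cont_VD (continuous_xi Γ) (continuous_phi Γ) z2)

lemma continuous_Dl (Γ : HamIsotopy) (z1 z2 : ℂ) : Continuous (Dl Γ z1 z2) := by
  unfold Dl
  exact (slice_cont_t (continuous_phi Γ) z1).sub (slice_cont_t (continuous_phi Γ) z2)

/-- a uniform Lipschitz bound for the vector field on the disc, for times in `[0,1]`. -/
lemma exists_lip (Γ : HamIsotopy) : ∃ L : ℝ, 0 ≤ L ∧
    ∀ t ∈ Set.Icc (0:ℝ) 1, ∀ w1 ∈ Disc, ∀ w2 ∈ Disc,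
      ‖xi Γ t w1 - xi Γ t w2‖ ≤ L * ‖w1 - w2‖ := by
  set Xi : ℝ × ℂ → ℂ := fun q => xi Γ q.1 q.2 with hXidef
  have hXi : ContDiff ℝ (⊤ : ℕ∞) Xi := contDiff_xi Γ
  have hA' : ContDiff ℝ (⊤ : ℕ∞) fun q : ℝ × ℂ => fderiv ℝ Xi q := hXi.fderiv_right (by simp)
  have hA : Continuous fun q : ℝ × ℂ => fderiv ℝ Xi q := hA'.continuous
  have hcpt : IsCompact ((Set.Icc (0:ℝ) 1) ×ˢ Disc) :=
    isCompact_Icc.prod (isCompact_closedBall 0 1)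
  have hne : ((Set.Icc (0:ℝ) 1) ×ˢ Disc).Nonempty :=
    ⟨(0, 0), by constructor <;> simp [Disc]⟩
  obtain ⟨q₀, hq₀, hmax⟩ := hcpt.exists_isMaxOn hne (hA.norm.continuousOn)
  set C : ℝ := ‖fderiv ℝ Xi q₀‖ with hC
  refine ⟨max C 0, le_max_right _ _, ?_⟩
  intro t ht w1 h1 w2 h2
  have hder : ∀ w ∈ Disc, HasFDerivWithinAt (fun w : ℂ => Xi (t, w))
      ((fderiv ℝ Xi (t, w)).comp (ContinuousLinearMap.inr ℝ ℝ ℂ)) Disc w := by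
    intro w _
    exact (((hXi.differentiable (by simp)) (t, w)).hasFDerivAt.comp w
      (hasFDerivAt_prodMk_right t w)).hasFDerivWithinAt
  have hbound : ∀ w ∈ Disc,
      ‖(fderiv ℝ Xi (t, w)).comp (ContinuousLinearMap.inr ℝ ℝ ℂ)‖ ≤ max C 0 := by
    intro w hw
    refine le_trans (ContinuousLinearMap.opNorm_comp_le _ _) ?_
    have h1' : ‖(ContinuousLinearMap.inr ℝ ℝ ℂ : ℂ →L[ℝ] ℝ × ℂ)‖ ≤ 1 := by
      apply ContinuousLinearMap.opNorm_le_bound _ zero_le_one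
      intro x
      simp [Prod.norm_def]
    have h2' : ‖fderiv ℝ Xi (t, w)‖ ≤ C := hmax (Set.mk_mem_prod ht hw)
    calc ‖fderiv ℝ Xi (t, w)‖ * ‖(ContinuousLinearMap.inr ℝ ℝ ℂ : ℂ →L[ℝ] ℝ × ℂ)‖
        ≤ C * 1 := mul_le_mul h2' h1' (norm_nonneg _) ((norm_nonneg _).trans h2')
      _ ≤ max C 0 := by simp
  have := (convex_closedBall (0:ℂ) 1).norm_image_sub_le_of_norm_hasFDerivWithin_le
    hder hbound h2 h1
  simpa using this

/-! ### The exponential formula and related facts -/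

lemma Dl_zero (Γ : HamIsotopy) (z1 z2 : ℂ) : Dl Γ z1 z2 0 = z1 - z2 := by
  rw [Dl, Γ.init]; rfl

lemma exp_J (Γ : HamIsotopy) {z1 z2 : ℂ} (h : ∀ t, Dl Γ z1 z2 t ≠ 0) :
    Complex.exp (J Γ z1 z2) * (z1 - z2) = Γ.φ 1 z1 - Γ.φ 1 z2 := by
  have := exp_formula (Vl Γ z1 z2) (Dl Γ z1 z2) (continuous_Vl Γ z1 z2)
    (continuous_Dl Γ z1 z2) (hasDerivAt_Dl Γ z1 z2) h
  rw [Dl_zero] at this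
  exact this

lemma continuous_q (Γ : HamIsotopy) {z1 z2 : ℂ} (h : ∀ t, Dl Γ z1 z2 t ≠ 0) :
    Continuous (fun t => Vl Γ z1 z2 t / Dl Γ z1 z2 t) :=
  (continuous_Vl Γ z1 z2).div (continuous_Dl Γ z1 z2) h

lemma Ifun_eq_im_J (Γ : HamIsotopy) {z1 z2 : ℂ} (h : ∀ t, Dl Γ z1 z2 t ≠ 0) :
    Ifun Γ z1 z2 = (J Γ z1 z2).im := by
  have hq := continuous_q Γ h
  have := Complex.imCLM.intervalIntegral_comp_comm
    (hq.intervalIntegrable (μ := volume) 0 1)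
  simpa [Ifun, J] using this

/-! ### Vanishing on the diagonal and at fixed points -/

lemma Ifun_diag (Γ : HamIsotopy) (z : ℂ) : Ifun Γ z z = 0 := by
  simp [Ifun, Vl, Dl]

lemma Ifun_fixed (Γ : HamIsotopy) {z1 z2 : ℂ} (h1 : ∀ t, Γ.φ t z1 = z1)
    (h2 : ∀ t, Γ.φ t z2 = z2) : Ifun Γ z1 z2 = 0 := by
  have heq : (fun s => Γ.φ s z1 - Γ.φ s z2) = fun _ => z1 - z2 := by
    funext s; rw [h1 s, h2 s]
  have hv : ∀ t, Vl Γ z1 z2 t = 0 := by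
    intro t
    rw [← deriv_Dl Γ z1 z2, heq]
    simp
  simp [Ifun, hv]

/-! ### Bound on Ifun -/

lemma abs_Ifun_le (Γ : HamIsotopy) {L : ℝ} (hL : 0 ≤ L)
    (hlip : ∀ t ∈ Set.Icc (0:ℝ) 1, ∀ w1 ∈ Disc, ∀ w2 ∈ Disc,
      ‖xi Γ t w1 - xi Γ t w2‖ ≤ L * ‖w1 - w2‖)
    {z1 z2 : ℂ} (h1 : z1 ∈ Disc) (h2 : z2 ∈ Disc) :
    |Ifun Γ z1 z2| ≤ L := by
  by_cases hne : z1 = z2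
  · subst hne; rw [Ifun_diag]; simpa using hL
  have hbd : ∀ t ∈ Set.uIoc (0:ℝ) 1, ‖(Vl Γ z1 z2 t / Dl Γ z1 z2 t).im‖ ≤ L := by
    intro t ht
    have htI : t ∈ Set.Icc (0:ℝ) 1 := by
      rw [Set.uIoc_of_le zero_le_one] at ht
      exact Set.Ioc_subset_Icc_self ht
    have hw1 : Γ.φ t z1 ∈ Disc := (Γ.bij t).mapsTo h1
    have hw2 : Γ.φ t z2 ∈ Disc := (Γ.bij t).mapsTo h2
    have hD : Dl Γ z1 z2 t ≠ 0 := Dl_ne_zero Γ h1 h2 hne t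
    have hDpos : 0 < ‖Dl Γ z1 z2 t‖ := norm_pos_iff.mpr hD
    have hV : ‖Vl Γ z1 z2 t‖ ≤ L * ‖Dl Γ z1 z2 t‖ := by
      have := hlip t htI _ hw1 _ hw2
      simpa [Vl, Dl] using this
    have him : |(Vl Γ z1 z2 t / Dl Γ z1 z2 t).im| ≤ ‖Vl Γ z1 z2 t / Dl Γ z1 z2 t‖ :=
      Complex.abs_im_le_norm _
    rw [norm_div] at him
    refine le_trans him ?_
    rw [div_le_iff₀ hDpos]
    exact hV
  have := intervalIntegral.norm_integral_le_of_norm_le_const (C := L)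
    (f := fun t => (Vl Γ z1 z2 t / Dl Γ z1 z2 t).im) (a := 0) (b := 1) hbd
  simpa [Ifun, Real.norm_eq_abs] using this

/-! ### Continuity of Ifun off the diagonal -/

lemma continuousOn_Ifun (Γ : HamIsotopy) :
    ContinuousOn (fun p : ℂ × ℂ => Ifun Γ p.1 p.2) S := by
  obtain ⟨L, hL0, hlip⟩ := exists_lip Γ
  unfold Ifun
  apply contOn_param (fun p t => (Vl Γ p.1 p.2 t / Dl Γ p.1 p.2 t).im) S L
  · rintro p ⟨⟨h1, h2⟩, hne⟩
    exact Complex.continuous_im.comp (continuous_q Γ (Dl_ne_zero Γ h1 h2 hne))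
  · rintro p ⟨⟨h1, h2⟩, hne⟩ t ht
    have htI : t ∈ Set.Icc (0:ℝ) 1 := by
      rw [Set.uIoc_of_le zero_le_one] at ht
      exact Set.Ioc_subset_Icc_self ht
    have hw1 : Γ.φ t p.1 ∈ Disc := (Γ.bij t).mapsTo h1
    have hw2 : Γ.φ t p.2 ∈ Disc := (Γ.bij t).mapsTo h2
    have hD : Dl Γ p.1 p.2 t ≠ 0 := Dl_ne_zero Γ h1 h2 hne t
    have hDpos : 0 < ‖Dl Γ p.1 p.2 t‖ := norm_pos_iff.mpr hD
    have hV : ‖Vl Γ p.1 p.2 t‖ ≤ L * ‖Dl Γ p.1 p.2 t‖ := by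
      have := hlip t htI _ hw1 _ hw2
      simpa [Vl, Dl] using this
    have him : |(Vl Γ p.1 p.2 t / Dl Γ p.1 p.2 t).im| ≤
        ‖Vl Γ p.1 p.2 t / Dl Γ p.1 p.2 t‖ := Complex.abs_im_le_norm _
    rw [norm_div] at him
    refine le_trans him ?_
    rw [div_le_iff₀ hDpos]
    exact hV
  · rintro t p₀ ⟨⟨h1, h2⟩, hne⟩
    have hVc : Continuous fun p : ℂ × ℂ => Vl Γ p.1 p.2 t := by
      unfold Vl
      exact ((slice_cont_z (continuous_xi Γ) t).comp
          ((slice_cont_z (continuous_phi Γ) t).comp continuous_fst)).sub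
        ((slice_cont_z (continuous_xi Γ) t).comp
          ((slice_cont_z (continuous_phi Γ) t).comp continuous_snd))
    have hDc : Continuous fun p : ℂ × ℂ => Dl Γ p.1 p.2 t := by
      unfold Dl
      exact ((slice_cont_z (continuous_phi Γ) t).comp continuous_fst).sub
        ((slice_cont_z (continuous_phi Γ) t).comp continuous_snd)
    have hD : Dl Γ p₀.1 p₀.2 t ≠ 0 := Dl_ne_zero Γ h1 h2 hne t
    exact Complex.continuous_im.continuousAt.comp
      (hVc.continuousAt.div hDc.continuousAt hD)

/-! ### Constancy of integer-valued continuous functions along paths -/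

lemma const_along (g : ℂ × ℂ → ℝ) (hg : ContinuousOn g S)
    (hint : ∀ p ∈ S, ∃ k : ℤ, g p = 2 * Real.pi * k)
    (γ : ℝ → ℂ × ℂ) (hγ : Continuous γ) (hmem : ∀ σ ∈ Set.Icc (0:ℝ) 1, γ σ ∈ S) :
    g (γ 0) = g (γ 1) := by
  have hcomp : ContinuousOn (g ∘ γ) (Set.Icc 0 1) :=
    hg.comp hγ.continuousOn (fun σ hσ => hmem σ hσ)
  have hpre : IsPreconnected ((g ∘ γ) '' Set.Icc 0 1) :=
    (isPreconnected_Icc).image _ hcomp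
  have hvals : ∀ x ∈ (g ∘ γ) '' Set.Icc 0 1, ∃ k : ℤ, x = 2 * Real.pi * k := by
    rintro x ⟨σ, hσ, rfl⟩
    exact hint _ (hmem σ hσ)
  exact int_preconn hpre hvals _ ⟨0, ⟨le_refl 0, zero_le_one⟩, rfl⟩ _
    ⟨1, ⟨zero_le_one, le_refl 1⟩, rfl⟩

lemma seg_mem {z w : ℂ} (hz : z ∈ Disc) (hw : w ∈ Disc) {σ : ℝ} (hσ : σ ∈ Set.Icc (0:ℝ) 1) :
    z + (σ:ℂ) * (w - z) ∈ Disc := by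
  have h := (convex_closedBall (0:ℂ) 1) hz hw (by linarith [hσ.2] : (0:ℝ) ≤ 1 - σ) hσ.1 (by ring)
  have heq : (1 - σ) • z + σ • w = z + (σ:ℂ) * (w - z) := by
    simp only [Complex.real_smul]
    push_cast
    ring
  rw [← heq]
  exact h

lemma abs_mem_Disc {w : ℂ} {s : ℝ} (hws : ‖w‖ = s) (hs1 : s ≤ 1) : w ∈ Disc := by
  rw [Disc, Metric.mem_closedBall, dist_zero_right, hws]
  exact hs1

lemma vanish {s : ℝ} (hs0 : 0 < s) (hs1 : s ≤ 1) (g : ℂ × ℂ → ℝ)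
    (hg : ContinuousOn g S) (hint : ∀ p ∈ S, ∃ k : ℤ, g p = 2 * Real.pi * k)
    (hb : ∀ p ∈ S, s ≤ ‖p.1‖ → s ≤ ‖p.2‖ → g p = 0) :
    ∀ p ∈ S, g p = 0 := by
  rintro ⟨z1, z2⟩ ⟨⟨h1, h2⟩, hne⟩
  have hne' : z1 ≠ z2 := hne
  obtain ⟨w, hws, hw⟩ := exists_pt s hs0 z2 (z1 - z2)
  have hwD : w ∈ Disc := abs_mem_Disc hws hs1
  have hmem1 : ∀ σ ∈ Set.Icc (0:ℝ) 1, ((z1, z2 + (σ:ℂ) * (w - z2)) : ℂ × ℂ) ∈ S := by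
    intro σ hσ
    refine ⟨⟨h1, seg_mem h2 hwD hσ⟩, ?_⟩
    intro heq
    simp only at heq
    rcases eq_or_lt_of_le hσ.1 with h0 | h0
    · rw [← h0] at heq
      simp at heq
      exact hne' heq
    · apply hw (1/σ) (one_le_one_div h0 hσ.2)
      have hσne : (σ:ℂ) ≠ 0 := by exact_mod_cast ne_of_gt h0
      push_cast
      field_simp
      linear_combination -heq
  have e1 : g (z1, z2) = g (z1, w) := by
    have hγ : Continuous fun σ : ℝ => ((z1, z2 + (σ:ℂ) * (w - z2)) : ℂ × ℂ) :=
      continuous_const.prodMk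
        (continuous_const.add (Complex.continuous_ofReal.mul continuous_const))
    have := const_along g hg hint _ hγ hmem1
    simpa using this
  have hz1w : ((z1, w) : ℂ × ℂ) ∈ S := by
    have := hmem1 1 ⟨zero_le_one, le_refl 1⟩
    simpa using this
  have hz1wne : z1 ≠ w := hz1w.2
  obtain ⟨v, hvs, hv⟩ := exists_pt s hs0 z1 (w - z1)
  have hvD : v ∈ Disc := abs_mem_Disc hvs hs1
  have hvw : v ≠ w := by
    intro heq
    apply hv 1 (le_refl 1)
    rw [heq]
    push_cast
    ring
  have hmem2 : ∀ σ ∈ Set.Icc (0:ℝ) 1, ((z1 + (σ:ℂ) * (v - z1), w) : ℂ × ℂ) ∈ S := by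
    intro σ hσ
    refine ⟨⟨seg_mem h1 hvD hσ, hwD⟩, ?_⟩
    intro heq
    simp only at heq
    rcases eq_or_lt_of_le hσ.1 with h0 | h0
    · rw [← h0] at heq
      simp at heq
      exact hz1wne heq
    · apply hv (1/σ) (one_le_one_div h0 hσ.2)
      have hσne : (σ:ℂ) ≠ 0 := by exact_mod_cast ne_of_gt h0
      push_cast
      field_simp
      linear_combination heq
  have e2 : g (z1, w) = g (v, w) := by
    have hγ : Continuous fun σ : ℝ => ((z1 + (σ:ℂ) * (v - z1), w) : ℂ × ℂ) :=
      (continuous_const.add (Complex.continuous_ofReal.mul continuous_const)).prodMk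
        continuous_const
    have := const_along g hg hint _ hγ hmem2
    simpa using this
  have e3 : g (v, w) = 0 := by
    apply hb (v, w) ⟨⟨hvD, hwD⟩, hvw⟩
    · rw [hvs]
    · rw [hws]
  rw [e1, e2, e3]

/-! ### the identity isotopy -/

noncomputable def idIso : HamIsotopy where
  φ := fun _ z => z
  H := fun _ _ => 0
  smooth_φ := contDiff_snd
  smooth_H := contDiff_const
  init := rfl
  bij := fun _ => ⟨fun _ h => h, fun _ _ _ _ h => h, fun z h => ⟨z, h, rfl⟩⟩
  measPres := fun _ => MeasurePreserving.id _
  bdry := ⟨1/2, by norm_num, fun _ _ _ => ⟨rfl, rfl⟩⟩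
  flow := by
    intro t z
    have h : wirtinger (fun _ : ℂ => ((0:ℝ):ℂ)) z = 0 := by
      simp [wirtinger]
    rw [h, mul_zero]
    exact hasDerivAt_const t z

lemma Ifun_idIso (z1 z2 : ℂ) : Ifun idIso z1 z2 = 0 :=
  Ifun_fixed idIso (fun _ => rfl) (fun _ => rfl)

/-! ### global injectivity of the time-`t` maps -/

lemma mem_Disc_iff {z : ℂ} : z ∈ Disc ↔ ‖z‖ ≤ 1 := by
  rw [Disc, Metric.mem_closedBall, dist_zero_right]

lemma phi_fix_outside (Γ : HamIsotopy) (t : ℝ) {z : ℂ} (hz : z ∉ Disc) : Γ.φ t z = z := by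
  obtain ⟨r, hr, hfix⟩ := Γ.bdry
  refine (hfix t z ?_).1
  rw [mem_Disc_iff] at hz
  push_neg at hz
  linarith
lemma phi_injective (Γ : HamIsotopy) (t : ℝ) : Function.Injective (Γ.φ t) := by
  intro a b heq
  by_cases ha : a ∈ Disc <;> by_cases hb : b ∈ Disc
  · exact (Γ.bij t).injOn ha hb heq
  · exfalso
    rw [phi_fix_outside Γ t hb] at heq
    exact hb (heq ▸ (Γ.bij t).mapsTo ha)
  · exfalso
    rw [phi_fix_outside Γ t ha] at heq
    exact ha (heq ▸ (Γ.bij t).mapsTo hb)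
  · rw [phi_fix_outside Γ t ha, phi_fix_outside Γ t hb] at heq
    exact heq

/-! ### The key pointwise identity -/

lemma key (Γ₁ Γ₂ Γ₃ : HamIsotopy) (h : Γ₃.φ 1 = Γ₁.φ 1 ∘ Γ₂.φ 1) :
    ∀ z1 ∈ Disc, ∀ z2 ∈ Disc,
      Ifun Γ₃ z1 z2 = Ifun Γ₁ (Γ₂.φ 1 z1) (Γ₂.φ 1 z2) + Ifun Γ₂ z1 z2 := by
  obtain ⟨r1, hr1, hfix1⟩ := Γ₁.bdry
  obtain ⟨r2, hr2, hfix2⟩ := Γ₂.bdry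
  obtain ⟨r3, hr3, hfix3⟩ := Γ₃.bdry
  set m : ℝ := max (max r1 (max r2 r3)) 0 with hm
  have hm0 : 0 ≤ m := le_max_right _ _
  have hm1 : m < 1 := by
    apply max_lt _ one_pos
    exact max_lt hr1 (max_lt hr2 hr3)
  set s : ℝ := (m + 1) / 2 with hs
  have hs0 : 0 < s := by positivity
  have hs1 : s ≤ 1 := by rw [hs]; linarith
  have hms : m < s := by rw [hs]; linarith
  have hr1s : r1 ≤ s := le_trans (le_trans (le_max_left _ _) (le_max_left _ _)) (le_of_lt hms)
  have hr2s : r2 ≤ s :=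
    le_trans (le_trans (le_trans (le_max_left _ _) (le_max_right _ _)) (le_max_left _ _))
      (le_of_lt hms)
  have hr3s : r3 ≤ s :=
    le_trans (le_trans (le_trans (le_max_right _ _) (le_max_right _ _)) (le_max_left _ _))
      (le_of_lt hms)
  set g : ℂ × ℂ → ℝ := fun p =>
    Ifun Γ₃ p.1 p.2 - Ifun Γ₁ (Γ₂.φ 1 p.1) (Γ₂.φ 1 p.2) - Ifun Γ₂ p.1 p.2 with hgdef
  have hTcont : Continuous (fun p : ℂ × ℂ => ((Γ₂.φ 1 p.1, Γ₂.φ 1 p.2) : ℂ × ℂ)) :=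
    ((slice_cont_z (continuous_phi Γ₂) 1).comp continuous_fst).prodMk
      ((slice_cont_z (continuous_phi Γ₂) 1).comp continuous_snd)
  have hTS : Set.MapsTo (fun p : ℂ × ℂ => ((Γ₂.φ 1 p.1, Γ₂.φ 1 p.2) : ℂ × ℂ)) S S := by
    rintro p ⟨⟨h1, h2⟩, hne⟩
    refine ⟨⟨(Γ₂.bij 1).mapsTo h1, (Γ₂.bij 1).mapsTo h2⟩, ?_⟩
    exact fun heq => hne (phi_injective Γ₂ 1 heq)
  have hgcont : ContinuousOn g S := by
    rw [hgdef]
    exact ((continuousOn_Ifun Γ₃).sub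
      ((continuousOn_Ifun Γ₁).comp hTcont.continuousOn hTS)).sub (continuousOn_Ifun Γ₂)
  have hint : ∀ p ∈ S, ∃ k : ℤ, g p = 2 * Real.pi * k := by
    rintro ⟨z1, z2⟩ ⟨⟨h1, h2⟩, hne⟩
    have hne' : z1 ≠ z2 := hne
    set w1 := Γ₂.φ 1 z1 with hw1def
    set w2 := Γ₂.φ 1 z2 with hw2def
    have hw1 : w1 ∈ Disc := (Γ₂.bij 1).mapsTo h1
    have hw2 : w2 ∈ Disc := (Γ₂.bij 1).mapsTo h2
    have hwne : w1 ≠ w2 := fun heq => hne' (phi_injective Γ₂ 1 heq)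
    have hD3 := Dl_ne_zero Γ₃ h1 h2 hne'
    have hD1 := Dl_ne_zero Γ₁ hw1 hw2 hwne
    have hD2 := Dl_ne_zero Γ₂ h1 h2 hne'
    have e3 := exp_J Γ₃ hD3
    have e1 := exp_J Γ₁ hD1
    have e2 := exp_J Γ₂ hD2
    have hz : (z1 - z2 : ℂ) ≠ 0 := sub_ne_zero.2 hne'
    have hcomp1 : Γ₃.φ 1 z1 = Γ₁.φ 1 w1 := by rw [h]; rfl
    have hcomp2 : Γ₃.φ 1 z2 = Γ₁.φ 1 w2 := by rw [h]; rfl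
    have hE : Complex.exp (J Γ₃ z1 z2) =
        Complex.exp (J Γ₁ w1 w2) * Complex.exp (J Γ₂ z1 z2) := by
      apply mul_right_cancel₀ hz
      rw [e3, hcomp1, hcomp2, mul_assoc, e2, e1]
    have hone : Complex.exp (J Γ₃ z1 z2 - (J Γ₁ w1 w2 + J Γ₂ z1 z2)) = 1 := by
      rw [Complex.exp_sub, hE, Complex.exp_add]
      exact div_self (mul_ne_zero (Complex.exp_ne_zero _) (Complex.exp_ne_zero _))
    obtain ⟨n, hn⟩ := Complex.exp_eq_one_iff.mp hone
    refine ⟨n, ?_⟩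
    have him : (J Γ₃ z1 z2 - (J Γ₁ w1 w2 + J Γ₂ z1 z2)).im = 2 * Real.pi * n := by
      rw [hn]
      simp [Complex.mul_im]
      ring
    rw [hgdef]
    simp only
    rw [Ifun_eq_im_J Γ₃ hD3, Ifun_eq_im_J Γ₁ hD1, Ifun_eq_im_J Γ₂ hD2]
    rw [← him]
    simp [Complex.sub_im, Complex.add_im]
    ring
  have hb : ∀ p ∈ S, s ≤ ‖p.1‖ → s ≤ ‖p.2‖ → g p = 0 := by
    rintro ⟨z1, z2⟩ ⟨⟨h1, h2⟩, hne⟩ ha1 ha2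
    have hf1 : ∀ (Γ : HamIsotopy) (r : ℝ), r ≤ s →
        (∀ t z, r ≤ ‖z‖ → Γ.φ t z = z ∧ Γ.H t z = 0) →
        (∀ t, Γ.φ t z1 = z1) ∧ (∀ t, Γ.φ t z2 = z2) := by
      intro Γ r hrs hfix
      exact ⟨fun t => (hfix t z1 (le_trans hrs ha1)).1, fun t => (hfix t z2 (le_trans hrs ha2)).1⟩
    obtain ⟨hf3a, hf3b⟩ := hf1 Γ₃ r3 hr3s hfix3
    obtain ⟨hf1a, hf1b⟩ := hf1 Γ₁ r1 hr1s hfix1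
    obtain ⟨hf2a, hf2b⟩ := hf1 Γ₂ r2 hr2s hfix2
    have hI3 : Ifun Γ₃ z1 z2 = 0 := Ifun_fixed Γ₃ hf3a hf3b
    have hI2 : Ifun Γ₂ z1 z2 = 0 := Ifun_fixed Γ₂ hf2a hf2b
    have hI1 : Ifun Γ₁ (Γ₂.φ 1 z1) (Γ₂.φ 1 z2) = 0 := by
      rw [hf2a 1, hf2b 1]
      exact Ifun_fixed Γ₁ hf1a hf1b
    rw [hgdef]
    simp only
    rw [hI3, hI2, hI1]
    ring
  have hvan := vanish hs0 hs1 g hgcont hint hb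
  intro z1 h1 z2 h2
  by_cases hne : z1 = z2
  · subst hne
    rw [Ifun_diag, Ifun_diag, Ifun_diag]
    ring
  · have := hvan (z1, z2) ⟨⟨h1, h2⟩, hne⟩
    rw [hgdef] at this
    simp only at this
    linarith

/-! ### measure-theoretic facts -/

lemma measurableSet_DiscProd : MeasurableSet (Disc ×ˢ Disc) :=
  (measurableSet_closedBall).prod (measurableSet_closedBall)

lemma measurableSet_S : MeasurableSet S := by
  have h : {p : ℂ × ℂ | p.1 ≠ p.2} = {p : ℂ × ℂ | p.1 = p.2}ᶜ := rfl
  rw [S, h]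
  exact measurableSet_DiscProd.inter
    (isClosed_eq continuous_fst continuous_snd).measurableSet.compl

lemma restrict_eq_S :
    (volume : Measure (ℂ × ℂ)).restrict (Disc ×ˢ Disc) = volume.restrict S := by
  apply Measure.restrict_congr_set
  rw [Filter.eventuallyEq_set]
  have hnull : volume ((Disc ×ˢ Disc) \ S) = 0 := by
    apply measure_mono_null _ diag_null
    intro p hp
    rcases hp with ⟨hD, hnS⟩
    by_contra hdiag
    exact hnS ⟨hD, hdiag⟩
  have hnull2 : volume (S \ (Disc ×ˢ Disc)) = 0 := by
    have : S \ (Disc ×ˢ Disc) = ∅ := by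
      apply Set.eq_empty_of_forall_notMem
      rintro p ⟨⟨hD, _⟩, hn⟩
      exact hn hD
    rw [this]; exact measure_empty
  have h1 := measure_eq_zero_iff_ae_notMem.mp hnull
  have h2 := measure_eq_zero_iff_ae_notMem.mp hnull2
  filter_upwards [h1, h2] with p hp1 hp2
  constructor
  · intro hD
    by_contra hnS
    exact hp1 ⟨hD, hnS⟩
  · intro hS
    by_contra hnD
    exact hp2 ⟨hS, hnD⟩

instance : IsFiniteMeasure ((volume : Measure (ℂ × ℂ)).restrict (Disc ×ˢ Disc)) := by
  constructor
  rw [Measure.restrict_apply_univ]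
  exact discProd_lt_top

lemma integrable_aux (Γ : HamIsotopy) (T : ℂ × ℂ → ℂ × ℂ) (hT : Continuous T)
    (hTS : Set.MapsTo T S S) (hTD : Set.MapsTo T (Disc ×ˢ Disc) (Disc ×ˢ Disc)) (c : ℝ) :
    Integrable (fun p => c * Ifun Γ (T p).1 (T p).2)
      ((volume : Measure (ℂ × ℂ)).restrict (Disc ×ˢ Disc)) := by
  obtain ⟨L, hL0, hlip⟩ := exists_lip Γ
  constructor
  · rw [restrict_eq_S]
    apply ContinuousOn.aestronglyMeasurable _ measurableSet_S
    exact ((continuousOn_Ifun Γ).comp hT.continuousOn hTS).const_smul c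
  · apply HasFiniteIntegral.of_bounded (C := |c| * L)
    apply (ae_restrict_iff' measurableSet_DiscProd).2
    apply Filter.Eventually.of_forall
    intro p hp
    have hTp := hTD hp
    have hb := abs_Ifun_le Γ hL0 hlip hTp.1 hTp.2
    rw [Real.norm_eq_abs, abs_mul]
    exact mul_le_mul_of_nonneg_left hb (abs_nonneg c)

lemma integral_comp_T (Γ₂ : HamIsotopy) (f : ℂ × ℂ → ℝ) :
    ∫ p in Disc ×ˢ Disc, f (Γ₂.φ 1 p.1, Γ₂.φ 1 p.2) = ∫ p in Disc ×ˢ Disc, f p := by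
  have hmp := Γ₂.measPres 1
  have hT : MeasurePreserving (fun p : ℂ × ℂ => ((Γ₂.φ 1 p.1, Γ₂.φ 1 p.2) : ℂ × ℂ))
      ((volume.restrict Disc).prod (volume.restrict Disc))
      ((volume.restrict Disc).prod (volume.restrict Disc)) := hmp.prod hmp
  have hTcont : Continuous (fun p : ℂ × ℂ => ((Γ₂.φ 1 p.1, Γ₂.φ 1 p.2) : ℂ × ℂ)) :=
    ((slice_cont_z (continuous_phi Γ₂) 1).comp continuous_fst).prodMk
      ((slice_cont_z (continuous_phi Γ₂) 1).comp continuous_snd)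
  have hTinj : Function.Injective (fun p : ℂ × ℂ => ((Γ₂.φ 1 p.1, Γ₂.φ 1 p.2) : ℂ × ℂ)) := by
    rintro ⟨a1, a2⟩ ⟨b1, b2⟩ heq
    simp only [Prod.mk.injEq] at heq
    exact Prod.ext (phi_injective Γ₂ 1 heq.1) (phi_injective Γ₂ 1 heq.2)
  have hemb : MeasurableEmbedding (fun p : ℂ × ℂ => ((Γ₂.φ 1 p.1, Γ₂.φ 1 p.2) : ℂ × ℂ)) :=
    hTcont.measurableEmbedding hTinj
  have hrr : (volume : Measure (ℂ × ℂ)).restrict (Disc ×ˢ Disc) =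
      (volume.restrict Disc).prod (volume.restrict Disc) := by
    rw [Measure.volume_eq_prod, Measure.prod_restrict]
  rw [hrr]
  exact hT.integral_comp hemb f

end Stmt12

open Stmt12 in
/-- The average rotation number is well-defined (depends only on the time-one map)
and is a group homomorphism. -/
theorem stmt_12 :
    (∀ Γ Γ' : HamIsotopy, Γ.φ 1 = Γ'.φ 1 → Phi Γ = Phi Γ') ∧
    (∀ Γ₁ Γ₂ Γ₃ : HamIsotopy, Γ₃.φ 1 = Γ₁.φ 1 ∘ Γ₂.φ 1 →
      Phi Γ₃ = Phi Γ₁ + Phi Γ₂) := by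
  constructor
  · intro Γ Γ' hphi
    have hkey := key Γ' idIso Γ (by rw [hphi]; rfl)
    rw [Phi_eq, Phi_eq]
    apply setIntegral_congr_fun measurableSet_DiscProd
    rintro ⟨z1, z2⟩ ⟨h1, h2⟩
    have := hkey z1 h1 z2 h2
    simp only [Ifun_idIso, add_zero] at this
    simp only
    rw [this]
    rfl
  · intro Γ₁ Γ₂ Γ₃ h
    have hkey := key Γ₁ Γ₂ Γ₃ h
    rw [Phi_eq, Phi_eq, Phi_eq]
    set c : ℝ := 1 / (2 * Real.pi) with hc
    have hTcont : Continuous (fun p : ℂ × ℂ => ((Γ₂.φ 1 p.1, Γ₂.φ 1 p.2) : ℂ × ℂ)) :=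
      ((slice_cont_z (continuous_phi Γ₂) 1).comp continuous_fst).prodMk
        ((slice_cont_z (continuous_phi Γ₂) 1).comp continuous_snd)
    have hTS : Set.MapsTo (fun p : ℂ × ℂ => ((Γ₂.φ 1 p.1, Γ₂.φ 1 p.2) : ℂ × ℂ)) S S := by
      rintro p ⟨⟨h1, h2⟩, hne⟩
      exact ⟨⟨(Γ₂.bij 1).mapsTo h1, (Γ₂.bij 1).mapsTo h2⟩,
        fun heq => hne (phi_injective Γ₂ 1 heq)⟩
    have hTD : Set.MapsTo (fun p : ℂ × ℂ => ((Γ₂.φ 1 p.1, Γ₂.φ 1 p.2) : ℂ × ℂ))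
        (Disc ×ˢ Disc) (Disc ×ˢ Disc) := by
      rintro p ⟨h1, h2⟩
      exact ⟨(Γ₂.bij 1).mapsTo h1, (Γ₂.bij 1).mapsTo h2⟩
    have hstep : ∫ p in Disc ×ˢ Disc, c * Ifun Γ₃ p.1 p.2 =
        ∫ p in Disc ×ˢ Disc,
          (c * Ifun Γ₁ (Γ₂.φ 1 p.1) (Γ₂.φ 1 p.2) + c * Ifun Γ₂ p.1 p.2) := by
      apply setIntegral_congr_fun measurableSet_DiscProd
      rintro ⟨z1, z2⟩ ⟨h1, h2⟩
      simp only
      rw [hkey z1 h1 z2 h2]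
      ring
    rw [hstep]
    have hint1 : Integrable (fun p : ℂ × ℂ => c * Ifun Γ₁ (Γ₂.φ 1 p.1) (Γ₂.φ 1 p.2))
        ((volume : Measure (ℂ × ℂ)).restrict (Disc ×ˢ Disc)) :=
      integrable_aux Γ₁ _ hTcont hTS hTD c
    have hint2 : Integrable (fun p : ℂ × ℂ => c * Ifun Γ₂ p.1 p.2)
        ((volume : Measure (ℂ × ℂ)).restrict (Disc ×ˢ Disc)) :=
      integrable_aux Γ₂ id continuous_id (Set.mapsTo_id S) (Set.mapsTo_id _) c
    rw [integral_add hint1 hint2]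
    congr 1
    exact integral_comp_T Γ₂ (fun p => c * Ifun Γ₁ p.1 p.2)
end
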